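/- arXiv:2411.05896 — 4 statements merged into one kernel-verified Lean document; each statement's English description precedes it below -/
import Mathlib

section
/- Let w∈ℝ^{N×N} have nonnegative entries; for i=1,…,N let M^i be progressively measurable with ∫₀^T 𝔼[(M^i_t)²]dt<∞ and let H^i,K^i∈𝒢 be Volterra kernels. Then the coupled linear system of Volterra equations X^i_t = M^i_t + ∫₀ᵗ H^i(t,s)X^i_s ds + ∫₀ᵗ K^i(t,s)(Σ_{j=1}^N w_{ij}X^j_s) ds (for i=1,…,N, dℙ⊗dt-a.e. on Ω×[0,T]) admits a solution X=(X^1,…,X^N) with each X^i progressively measurable and ∫₀^T 𝔼[Σ_{i=1}^N (X^i_t)²]dt<∞, and this solution is unique up to dℙ⊗dt-a.e. equality. -/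
open MeasureTheory Set Filter

noncomputable section

/-- Inner product on `L²([0,T],ℝ)`. -/
def ip (T : ℝ) (f g : ℝ → ℝ) : ℝ := ∫ t in Icc (0:ℝ) T, f t * g t

/-- Integral operator induced by a kernel `G`. -/
def opK (T : ℝ) (G : ℝ → ℝ → ℝ) (f : ℝ → ℝ) : ℝ → ℝ :=
  fun t => ∫ s in Icc (0:ℝ) T, G t s * f s

/-- Integral operator induced by the adjoint kernel `G*(t,s) = G(s,t)`. -/
def opKadj (T : ℝ) (G : ℝ → ℝ → ℝ) (f : ℝ → ℝ) : ℝ → ℝ :=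
  fun t => ∫ s in Icc (0:ℝ) T, G s t * f s

/-- `G ∈ L²([0,T]²,ℝ)`. -/
def IsL2Kernel (T : ℝ) (G : ℝ → ℝ → ℝ) : Prop :=
  Measurable (Function.uncurry G) ∧
    Integrable (fun p : ℝ × ℝ => (G p.1 p.2) ^ 2)
      ((volume.restrict (Icc (0:ℝ) T)).prod (volume.restrict (Icc (0:ℝ) T)))

/-- Volterra kernel in `𝒢`: square integrable on `[0,T]²` and vanishing for `s ≥ t`. -/
def IsVolterraKernel (T : ℝ) (G : ℝ → ℝ → ℝ) : Prop :=
  IsL2Kernel T G ∧ ∀ t s : ℝ, t ≤ s → G t s = 0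

/-- Membership in `L²([0,T],ℝ)`. -/
def MemL2 (T : ℝ) (f : ℝ → ℝ) : Prop :=
  Measurable f ∧ Integrable (fun t => (f t) ^ 2) (volume.restrict (Icc (0:ℝ) T))

/-- Membership in `L²([0,T],ℝ^N)`. -/
def MemL2N (T : ℝ) {N : ℕ} (f : ℝ → Fin N → ℝ) : Prop :=
  (∀ i, Measurable fun t => f t i) ∧
    Integrable (fun t => ∑ i, (f t i) ^ 2) (volume.restrict (Icc (0:ℝ) T))

variable {Ω : Type}

/-- Square-integrability of a process on `[0,T] × Ω`. -/
def SqInt (T : ℝ) [MeasurableSpace Ω] (P : Measure Ω) (α : ℝ → Ω → ℝ) : Prop :=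
  Integrable (fun p : ℝ × Ω => (α p.1 p.2) ^ 2) ((volume.restrict (Icc (0:ℝ) T)).prod P)

/-- Admissible control: progressively measurable and square integrable on `[0,T] × Ω`. -/
def Admissible (T : ℝ) {mΩ : MeasurableSpace Ω} (F : Filtration ℝ mΩ) (P : Measure Ω)
    (α : ℝ → Ω → ℝ) : Prop :=
  ProgMeasurable F α ∧ SqInt T P α

namespace VolAux
open scoped ENNReal NNReal Topology

variable {Ω : Type} {mΩ : MeasurableSpace Ω}

def wexp (l t : ℝ) : ℝ≥0∞ := ENNReal.ofReal (Real.exp (-(l * t)))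

lemma wexp_ne_top (l t : ℝ) : wexp l t ≠ ∞ := ENNReal.ofReal_ne_top

lemma wexp_ne_zero (l t : ℝ) : wexp l t ≠ 0 := by
  simp [wexp, ENNReal.ofReal_eq_zero, not_le, Real.exp_pos]

lemma wexp_zero (t : ℝ) : wexp 0 t = 1 := by simp [wexp]

lemma wexp_le_one {l t : ℝ} (hl : 0 ≤ l) (ht : 0 ≤ t) : wexp l t ≤ 1 := by
  rw [wexp, ← ENNReal.ofReal_one]
  exact ENNReal.ofReal_le_ofReal (Real.exp_le_one_iff.2 (neg_nonpos.2 (mul_nonneg hl ht)))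

lemma wexp_add (l t s : ℝ) : wexp l t * wexp l s = wexp l (t + s) := by
  rw [wexp, wexp, wexp, ← ENNReal.ofReal_mul (Real.exp_nonneg _), ← Real.exp_add]
  have : -(l * t) + -(l * s) = -(l * (t + s)) := by ring
  rw [this]

lemma wexp_mul_wexp_neg (l t s : ℝ) : wexp l t * wexp l (-s) = wexp l (t - s) := by
  rw [wexp_add, ← sub_eq_add_neg]

lemma wexp_neg_mul_wexp (l t : ℝ) : wexp l (-t) * wexp l t = 1 := by
  rw [wexp_add, neg_add_cancel, wexp, mul_zero, neg_zero, Real.exp_zero, ENNReal.ofReal_one]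

lemma half_sq (x : ℝ≥0∞) : (x ^ (2⁻¹ : ℝ)) ^ (2 : ℝ) = x := by
  rw [← ENNReal.rpow_mul]; norm_num

lemma sq_as_rpow (x : ℝ≥0∞) : x ^ 2 = x ^ (2 : ℝ) := by
  rw [← ENNReal.rpow_natCast x 2]; norm_num

def AOp (T : ℝ) (G : ℝ → ℝ → ℝ) (f : ℝ → Ω → ℝ) : ℝ → Ω → ℝ :=
  fun t ω => ∫ s in Icc (0:ℝ) T, G t s * f s ω

def Jl (T : ℝ) (P : Measure Ω) (l : ℝ) (f : ℝ → Ω → ℝ) : ℝ≥0∞ :=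
  ∫⁻ p, wexp l p.1 * (‖f p.1 p.2‖₊ : ℝ≥0∞) ^ 2 ∂((volume.restrict (Icc (0:ℝ) T)).prod P)

def nrm (T : ℝ) (P : Measure Ω) (l : ℝ) (f : ℝ → Ω → ℝ) : ℝ≥0∞ := Jl T P l f ^ (2⁻¹ : ℝ)

def cK (T l : ℝ) (G : ℝ → ℝ → ℝ) : ℝ≥0∞ :=
  ∫⁻ q, (‖G q.1 q.2‖₊ : ℝ≥0∞) ^ 2 * wexp l (q.1 - q.2)
    ∂((volume.restrict (Icc (0:ℝ) T)).prod (volume.restrict (Icc (0:ℝ) T)))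

lemma nrm_sq (T : ℝ) (P : Measure Ω) (l : ℝ) (f : ℝ → Ω → ℝ) :
    nrm T P l f ^ (2:ℝ) = Jl T P l f := half_sq _

lemma nrm_eq_zero_iff {T : ℝ} {P : Measure Ω} {l : ℝ} {f : ℝ → Ω → ℝ} :
    nrm T P l f = 0 ↔ Jl T P l f = 0 := by
  rw [nrm, ENNReal.rpow_eq_zero_iff]
  constructor
  · rintro (⟨h, -⟩ | ⟨-, h⟩)
    · exact h
    · norm_num at h
  · intro h; exact Or.inl ⟨h, by norm_num⟩

lemma nrm_lt_top_iff {T : ℝ} {P : Measure Ω} {l : ℝ} {f : ℝ → Ω → ℝ} :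
    nrm T P l f < ∞ ↔ Jl T P l f < ∞ := by
  constructor
  · intro h
    have := ENNReal.rpow_lt_top_of_nonneg (by norm_num : (0:ℝ) ≤ 2) h.ne
    rwa [nrm_sq] at this
  · intro h
    exact ENNReal.rpow_lt_top_of_nonneg (by norm_num) h.ne


section Meas
variable {T : ℝ} {P : Measure Ω} [SFinite P]

lemma ae_fst {Q : ℝ → Prop} (h : ∀ᵐ t ∂(volume.restrict (Icc (0:ℝ) T)), Q t) :
    ∀ᵐ p ∂((volume.restrict (Icc (0:ℝ) T)).prod P), Q p.1 :=
  Measure.quasiMeasurePreserving_fst.ae h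

lemma ae_snd {Q : Ω → Prop} (h : ∀ᵐ ω ∂P, Q ω) :
    ∀ᵐ p ∂((volume.restrict (Icc (0:ℝ) T)).prod P), Q p.2 :=
  Measure.quasiMeasurePreserving_snd.ae h

lemma ae_fst_mem_Icc (T : ℝ) (P : Measure Ω) [SFinite P] :
    ∀ᵐ p ∂((volume.restrict (Icc (0:ℝ) T)).prod P), p.1 ∈ Icc (0:ℝ) T :=
  ae_fst (ae_restrict_mem measurableSet_Icc)

lemma minMod_ae_eq (T : ℝ) (P : Measure Ω) [SFinite P] (f : ℝ → Ω → ℝ) :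
    (fun p : ℝ × Ω => f (min p.1 T) p.2) =ᵐ[(volume.restrict (Icc (0:ℝ) T)).prod P]
      fun p => f p.1 p.2 := by
  filter_upwards [ae_fst_mem_Icc T P] with p hp
  rw [min_eq_left hp.2]

end Meas

section PM
variable {F : Filtration ℝ mΩ}

lemma measurable_minMod {f : ℝ → Ω → ℝ} (hf : ProgMeasurable F f) (T : ℝ) :
    Measurable fun p : ℝ × Ω => f (min p.1 T) p.2 := by
  have h1 : Measurable[(Subtype.instMeasurableSpace).prod (F T)]
      fun p : Set.Iic T × Ω => f p.1 p.2 := (hf T).measurable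
  have h2 : @Measurable (ℝ × Ω) (Set.Iic T × Ω) _ ((Subtype.instMeasurableSpace).prod (F T))
      (fun p : ℝ × Ω => ((⟨min p.1 T, mem_Iic.2 (min_le_right _ _)⟩ : Set.Iic T), p.2)) := by
    refine Measurable.prodMk ?_ ?_
    · exact Measurable.subtype_mk (measurable_fst.min measurable_const)
    · exact (measurable_id'' (F.le T)).comp measurable_snd
  exact h1.comp h2

lemma progMeasurable_time (T : ℝ) :
    ProgMeasurable F (fun t (_ : Ω) => min t T) := by
  intro r
  exact ((measurable_subtype_coe.comp measurable_fst).min measurable_const).stronglyMeasurable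

lemma progMeasurable_minMod {f : ℝ → Ω → ℝ} (hf : ProgMeasurable F f) (T : ℝ) :
    ProgMeasurable F (fun t ω => f (min t T) ω) :=
  ProgMeasurable.comp hf (progMeasurable_time T) (fun _ _ => min_le_left _ _)

lemma measurable_AOp {T : ℝ} {G : ℝ → ℝ → ℝ} (hG : Measurable (Function.uncurry G))
    {f : ℝ → Ω → ℝ} (hf : Measurable fun p : ℝ × Ω => f p.1 p.2) :
    Measurable fun p : ℝ × Ω => AOp T G f p.1 p.2 := by
  have h : StronglyMeasurable fun q : (ℝ × Ω) × ℝ => G q.1.1 q.2 * f q.2 q.1.2 :=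
    ((hG.comp ((measurable_fst.comp measurable_fst).prodMk measurable_snd)).mul
      (hf.comp (measurable_snd.prodMk (measurable_snd.comp measurable_fst)))).stronglyMeasurable
  exact (h.integral_prod_right' (ν := volume.restrict (Icc (0:ℝ) T))).measurable

lemma progMeasurable_AOp {T : ℝ} {G : ℝ → ℝ → ℝ}
    (hG : Measurable (Function.uncurry G)) (hGv : ∀ t s, t ≤ s → G t s = 0)
    {f : ℝ → Ω → ℝ} (hf : ProgMeasurable F f) :
    ProgMeasurable F (AOp T G f) := by
  intro r
  have key : (fun p : Set.Iic r × Ω => AOp T G f p.1 p.2)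
      = fun p : Set.Iic r × Ω => ∫ s in Icc (0:ℝ) T, G (p.1 : ℝ) s * f (min s r) p.2 := by
    funext p
    refine setIntegral_congr_fun measurableSet_Icc (fun s _ => ?_)
    rcases le_or_gt s r with h | h
    · rw [min_eq_left h]
    · rw [hGv (p.1 : ℝ) s (le_trans (mem_Iic.1 p.1.2) h.le), zero_mul, zero_mul]
  rw [key]
  have hψ : @Measurable ((Set.Iic r × Ω) × ℝ) (Set.Iic r × Ω)
      ((Subtype.instMeasurableSpace.prod (F r)).prod Real.measurableSpace)
      (Subtype.instMeasurableSpace.prod (F r))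
      (fun q => ((⟨min q.2 r, mem_Iic.2 (min_le_right _ _)⟩ : Set.Iic r), q.1.2)) := by
    refine Measurable.prodMk ?_ ?_
    · exact Measurable.subtype_mk (measurable_snd.min measurable_const)
    · exact measurable_snd.comp measurable_fst
  have h1 : StronglyMeasurable[(Subtype.instMeasurableSpace.prod (F r)).prod Real.measurableSpace]
      fun q : (Set.Iic r × Ω) × ℝ => G (q.1.1 : ℝ) q.2 * f (min q.2 r) q.1.2 := by
    apply Measurable.stronglyMeasurable
    apply Measurable.mul
    · exact hG.comp ((measurable_subtype_coe.comp (measurable_fst.comp measurable_fst)).prodMk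
        measurable_snd)
    · exact ((hf r).measurable).comp hψ
  exact @MeasureTheory.StronglyMeasurable.integral_prod_right' (Set.Iic r × Ω) ℝ ℝ
    (Subtype.instMeasurableSpace.prod (F r)) Real.measurableSpace
    (volume.restrict (Icc (0:ℝ) T)) _ _ _ _ h1

end PM


section Core

lemma measurable_wexp (l : ℝ) : Measurable fun t : ℝ => wexp l t :=
  ENNReal.measurable_ofReal.comp (Real.continuous_exp.measurable.comp
    (measurable_id.const_mul l).neg)

lemma half_sq' (x : ℝ≥0∞) : (x ^ ((1:ℝ)/2)) ^ (2 : ℝ) = x := by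
  rw [← ENNReal.rpow_mul]; norm_num

lemma Jl_AOp_le {T l : ℝ} {P : Measure Ω} [SFinite P] {G : ℝ → ℝ → ℝ}
    (hG : Measurable (Function.uncurry G)) {f : ℝ → Ω → ℝ}
    (hf : Measurable fun p : ℝ × Ω => f p.1 p.2) :
    Jl T P l (AOp T G f) ≤ cK T l G * Jl T P l f := by
  set ν := volume.restrict (Icc (0:ℝ) T) with hν
  have hGsq : Measurable fun q : ℝ × ℝ => (‖G q.1 q.2‖₊ : ℝ≥0∞) ^ 2 :=
    (hG.nnnorm.coe_nnreal_ennreal).pow_const 2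
  have hGint : Measurable fun q : ℝ × ℝ => (‖G q.1 q.2‖₊ : ℝ≥0∞) ^ 2 * wexp l (-q.2) :=
    hGsq.mul ((measurable_wexp l).comp measurable_snd.neg)
  have hfsq : Measurable fun p : ℝ × Ω => wexp l p.1 * (‖f p.1 p.2‖₊ : ℝ≥0∞) ^ 2 :=
    ((measurable_wexp l).comp measurable_fst).mul ((hf.nnnorm.coe_nnreal_ennreal).pow_const 2)
  set Gi : ℝ → ℝ≥0∞ := fun t => ∫⁻ s, (‖G t s‖₊ : ℝ≥0∞) ^ 2 * wexp l (-s) ∂ν with hGi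
  set Fi : Ω → ℝ≥0∞ := fun ω => ∫⁻ s, wexp l s * (‖f s ω‖₊ : ℝ≥0∞) ^ 2 ∂ν with hFi
  have hGim : Measurable Gi := Measurable.lintegral_prod_right' hGint
  have hFim : Measurable Fi := Measurable.lintegral_prod_right'
    (f := fun q : Ω × ℝ => wexp l q.2 * (‖f q.2 q.1‖₊ : ℝ≥0∞) ^ 2)
    (((measurable_wexp l).comp measurable_snd).mul
      (((hf.comp (measurable_snd.prodMk measurable_fst)).nnnorm.coe_nnreal_ennreal).pow_const 2))
  -- pointwise estimate
  have stepA : ∀ t ω, wexp l t * (‖AOp T G f t ω‖₊ : ℝ≥0∞) ^ 2 ≤ (wexp l t * Gi t) * Fi ω := by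
    intro t ω
    set a : ℝ → ℝ≥0∞ := fun s => (‖G t s‖₊ : ℝ≥0∞) * (wexp l (-s)) ^ ((1:ℝ)/2) with ha
    set b : ℝ → ℝ≥0∞ := fun s => (wexp l s) ^ ((1:ℝ)/2) * (‖f s ω‖₊ : ℝ≥0∞) with hb
    have hab : ∀ s, (‖G t s‖₊ : ℝ≥0∞) * (‖f s ω‖₊ : ℝ≥0∞) = a s * b s := by
      intro s
      have h1 : (wexp l (-s)) ^ ((1:ℝ)/2) * (wexp l s) ^ ((1:ℝ)/2) = 1 := by
        rw [← ENNReal.mul_rpow_of_nonneg _ _ (by norm_num : (0:ℝ) ≤ 1/2),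
          wexp_neg_mul_wexp, ENNReal.one_rpow]
      calc (‖G t s‖₊ : ℝ≥0∞) * (‖f s ω‖₊ : ℝ≥0∞)
          = ((‖G t s‖₊ : ℝ≥0∞) * (‖f s ω‖₊ : ℝ≥0∞)) * 1 := (mul_one _).symm
        _ = a s * b s := by rw [← h1, ha, hb]; ring
    have hma : AEMeasurable a ν :=
      ((hG.of_uncurry_left.nnnorm.coe_nnreal_ennreal).mul
        ((((measurable_wexp l).comp measurable_neg)).pow_const _)).aemeasurable
    have hmb : AEMeasurable b ν :=
      (((measurable_wexp l).pow_const _).mul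
        ((hf.comp (measurable_id.prodMk measurable_const)).nnnorm.coe_nnreal_ennreal)).aemeasurable
    have hho := ENNReal.lintegral_mul_le_Lp_mul_Lq ν
      Real.HolderConjugate.two_two hma hmb
    have h0 : (‖AOp T G f t ω‖₊ : ℝ≥0∞) ≤ ∫⁻ s, a s * b s ∂ν := by
      refine le_trans (enorm_integral_le_lintegral_enorm _) (le_of_eq ?_)
      refine lintegral_congr fun s => ?_
      rw [enorm_eq_nnnorm, nnnorm_mul, ENNReal.coe_mul, hab]
    have ha2 : ∀ s, a s ^ (2:ℝ) = (‖G t s‖₊ : ℝ≥0∞) ^ 2 * wexp l (-s) := by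
      intro s
      rw [ha, ENNReal.mul_rpow_of_nonneg _ _ (by norm_num : (0:ℝ) ≤ 2), half_sq', ← sq_as_rpow]
    have hb2 : ∀ s, b s ^ (2:ℝ) = wexp l s * (‖f s ω‖₊ : ℝ≥0∞) ^ 2 := by
      intro s
      rw [hb, ENNReal.mul_rpow_of_nonneg _ _ (by norm_num : (0:ℝ) ≤ 2), half_sq', ← sq_as_rpow]
    have hX2 : (‖AOp T G f t ω‖₊ : ℝ≥0∞) ^ 2 ≤ Gi t * Fi ω := by
      calc (‖AOp T G f t ω‖₊ : ℝ≥0∞) ^ 2 = ((‖AOp T G f t ω‖₊ : ℝ≥0∞)) ^ (2:ℝ) := sq_as_rpow _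
        _ ≤ (∫⁻ s, a s * b s ∂ν) ^ (2:ℝ) := ENNReal.rpow_le_rpow h0 (by norm_num)
        _ ≤ ((∫⁻ s, a s ^ (2:ℝ) ∂ν) ^ ((1:ℝ)/2) * (∫⁻ s, b s ^ (2:ℝ) ∂ν) ^ ((1:ℝ)/2)) ^ (2:ℝ) :=
            ENNReal.rpow_le_rpow hho (by norm_num)
        _ = ((∫⁻ s, a s ^ (2:ℝ) ∂ν) ^ ((1:ℝ)/2)) ^ (2:ℝ) *
            ((∫⁻ s, b s ^ (2:ℝ) ∂ν) ^ ((1:ℝ)/2)) ^ (2:ℝ) := by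
            rw [ENNReal.mul_rpow_of_nonneg _ _ (by norm_num : (0:ℝ) ≤ 2)]
        _ = (∫⁻ s, a s ^ (2:ℝ) ∂ν) * (∫⁻ s, b s ^ (2:ℝ) ∂ν) := by rw [half_sq', half_sq']
        _ = Gi t * Fi ω := by rw [lintegral_congr ha2, lintegral_congr hb2]
    calc wexp l t * (‖AOp T G f t ω‖₊ : ℝ≥0∞) ^ 2 ≤ wexp l t * (Gi t * Fi ω) :=
          mul_le_mul_right hX2 _
      _ = (wexp l t * Gi t) * Fi ω := (mul_assoc _ _ _).symm
  -- integrate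
  have factor1 : (∫⁻ t, wexp l t * Gi t ∂ν) = cK T l G := by
    have e1 : ∀ t, wexp l t * Gi t = ∫⁻ s, (‖G t s‖₊ : ℝ≥0∞) ^ 2 * wexp l (t - s) ∂ν := by
      intro t
      rw [hGi, ← lintegral_const_mul' _ _ (wexp_ne_top l t)]
      refine lintegral_congr fun s => ?_
      rw [← wexp_mul_wexp_neg l t s]; ring
    rw [lintegral_congr e1, cK]
    exact (MeasureTheory.lintegral_prod _ ((hGsq.mul ((measurable_wexp l).comp
      (measurable_fst.sub measurable_snd))).aemeasurable)).symm
  have factor2 : (∫⁻ ω, Fi ω ∂P) = Jl T P l f := by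
    rw [Jl]
    exact (MeasureTheory.lintegral_prod_symm _ hfsq.aemeasurable).symm
  calc Jl T P l (AOp T G f)
      ≤ ∫⁻ p, (wexp l p.1 * Gi p.1) * Fi p.2 ∂(ν.prod P) :=
        lintegral_mono fun p => stepA p.1 p.2
    _ = (∫⁻ t, wexp l t * Gi t ∂ν) * ∫⁻ ω, Fi ω ∂P :=
        MeasureTheory.lintegral_prod_mul
          (((measurable_wexp l).mul hGim).aemeasurable) hFim.aemeasurable
    _ = cK T l G * Jl T P l f := by rw [factor1, factor2]

end Core


section NrmAlg

variable {T l : ℝ} {P : Measure Ω}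

lemma sq_half (x : ℝ≥0∞) : (x ^ 2) ^ ((1:ℝ)/2) = x := by
  rw [sq_as_rpow, ← ENNReal.rpow_mul]; norm_num

lemma nrm_def' (f : ℝ → Ω → ℝ) : nrm T P l f = Jl T P l f ^ ((1:ℝ)/2) := by
  rw [nrm, one_div]

lemma nrm_zero : nrm T P l (fun _ _ => (0:ℝ)) = 0 := by
  have : Jl T P l (fun _ _ => (0:ℝ)) = 0 := by
    rw [Jl]
    simp
  rw [nrm, this, ENNReal.zero_rpow_of_pos (by norm_num)]

lemma nrm_mono_Jl {f g : ℝ → Ω → ℝ} (h : Jl T P l f ≤ Jl T P l g) :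
    nrm T P l f ≤ nrm T P l g := ENNReal.rpow_le_rpow h (by norm_num)

lemma Jl_congr_ae {f g : ℝ → Ω → ℝ}
    (h : (fun p : ℝ × Ω => f p.1 p.2) =ᵐ[(volume.restrict (Icc (0:ℝ) T)).prod P]
      fun p => g p.1 p.2) : Jl T P l f = Jl T P l g :=
  lintegral_congr_ae (h.mono fun p hp => by dsimp only at hp ⊢; rw [hp])

lemma nrm_congr_ae {f g : ℝ → Ω → ℝ}
    (h : (fun p : ℝ × Ω => f p.1 p.2) =ᵐ[(volume.restrict (Icc (0:ℝ) T)).prod P]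
      fun p => g p.1 p.2) : nrm T P l f = nrm T P l g := by
  rw [nrm, nrm, Jl_congr_ae h]

lemma nrm_AOp_le {G : ℝ → ℝ → ℝ} [SFinite P]
    (hG : Measurable (Function.uncurry G)) {f : ℝ → Ω → ℝ}
    (hf : Measurable fun p : ℝ × Ω => f p.1 p.2) :
    nrm T P l (AOp T G f) ≤ cK T l G ^ ((1:ℝ)/2) * nrm T P l f := by
  rw [nrm_def', nrm_def', ← ENNReal.mul_rpow_of_nonneg _ _ (by norm_num : (0:ℝ) ≤ 1/2)]
  exact ENNReal.rpow_le_rpow (Jl_AOp_le hG hf) (by norm_num)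

lemma nrm_add_le {f g : ℝ → Ω → ℝ}
    (hf : Measurable fun p : ℝ × Ω => f p.1 p.2)
    (hg : Measurable fun p : ℝ × Ω => g p.1 p.2) :
    nrm T P l (fun t ω => f t ω + g t ω) ≤ nrm T P l f + nrm T P l g := by
  set μ := (volume.restrict (Icc (0:ℝ) T)).prod P with hμ
  set u : ℝ × Ω → ℝ≥0∞ := fun p => (wexp l p.1) ^ ((1:ℝ)/2) * (‖f p.1 p.2‖₊ : ℝ≥0∞) with hu
  set v : ℝ × Ω → ℝ≥0∞ := fun p => (wexp l p.1) ^ ((1:ℝ)/2) * (‖g p.1 p.2‖₊ : ℝ≥0∞) with hv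
  have husq : ∀ p, u p ^ (2:ℝ) = wexp l p.1 * (‖f p.1 p.2‖₊ : ℝ≥0∞) ^ 2 := fun p => by
    rw [hu, ENNReal.mul_rpow_of_nonneg _ _ (by norm_num : (0:ℝ) ≤ 2), half_sq', ← sq_as_rpow]
  have hvsq : ∀ p, v p ^ (2:ℝ) = wexp l p.1 * (‖g p.1 p.2‖₊ : ℝ≥0∞) ^ 2 := fun p => by
    rw [hv, ENNReal.mul_rpow_of_nonneg _ _ (by norm_num : (0:ℝ) ≤ 2), half_sq', ← sq_as_rpow]
  have hJf : Jl T P l f = ∫⁻ p, u p ^ (2:ℝ) ∂μ := (lintegral_congr husq).symm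
  have hJg : Jl T P l g = ∫⁻ p, v p ^ (2:ℝ) ∂μ := (lintegral_congr hvsq).symm
  have hle : Jl T P l (fun t ω => f t ω + g t ω) ≤ ∫⁻ p, ((u + v) p) ^ (2:ℝ) ∂μ := by
    refine lintegral_mono fun p => ?_
    have h1 : (u + v) p = (wexp l p.1) ^ ((1:ℝ)/2) *
        ((‖f p.1 p.2‖₊ : ℝ≥0∞) + (‖g p.1 p.2‖₊ : ℝ≥0∞)) := by
      simp only [Pi.add_apply, hu, hv, mul_add]
    rw [h1, ENNReal.mul_rpow_of_nonneg _ _ (by norm_num : (0:ℝ) ≤ 2), half_sq', ← sq_as_rpow]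
    refine mul_le_mul_right (pow_le_pow_left₀ (zero_le) ?_ 2) _
    rw [← ENNReal.coe_add]
    exact ENNReal.coe_le_coe.2 (nnnorm_add_le _ _)
  have hmu : AEMeasurable u μ :=
    ((((measurable_wexp l).comp measurable_fst).pow_const _).mul hf.nnnorm.coe_nnreal_ennreal).aemeasurable
  have hmv : AEMeasurable v μ :=
    ((((measurable_wexp l).comp measurable_fst).pow_const _).mul hg.nnnorm.coe_nnreal_ennreal).aemeasurable
  have hmink := ENNReal.lintegral_Lp_add_le hmu hmv (by norm_num : (1:ℝ) ≤ 2)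
  calc nrm T P l (fun t ω => f t ω + g t ω)
      ≤ (∫⁻ p, ((u + v) p) ^ (2:ℝ) ∂μ) ^ ((1:ℝ)/2) := by
        rw [nrm_def']; exact ENNReal.rpow_le_rpow hle (by norm_num)
    _ ≤ (∫⁻ p, u p ^ (2:ℝ) ∂μ) ^ ((1:ℝ)/2) + (∫⁻ p, v p ^ (2:ℝ) ∂μ) ^ ((1:ℝ)/2) := hmink
    _ = nrm T P l f + nrm T P l g := by rw [nrm_def', nrm_def', hJf, hJg]

lemma nrm_const_mul (c : ℝ) (f : ℝ → Ω → ℝ) :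
    nrm T P l (fun t ω => c * f t ω) = (‖c‖₊ : ℝ≥0∞) * nrm T P l f := by
  have h1 : ∀ p : ℝ × Ω, wexp l p.1 * (‖c * f p.1 p.2‖₊ : ℝ≥0∞) ^ 2
      = (‖c‖₊ : ℝ≥0∞) ^ 2 * (wexp l p.1 * (‖f p.1 p.2‖₊ : ℝ≥0∞) ^ 2) := by
    intro p
    rw [nnnorm_mul, ENNReal.coe_mul, mul_pow]
    ring
  rw [nrm, nrm, Jl, Jl, lintegral_congr h1,
    lintegral_const_mul' _ _ (by simp : ((‖c‖₊ : ℝ≥0∞) ^ 2) ≠ ∞),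
    ENNReal.mul_rpow_of_nonneg _ _ (by norm_num : (0:ℝ) ≤ 2⁻¹)]
  congr 1
  rw [← one_div, sq_half]

lemma nrm_sum_le {ι : Type} (s : Finset ι) (f : ι → ℝ → Ω → ℝ)
    (hf : ∀ i, Measurable fun p : ℝ × Ω => f i p.1 p.2) :
    nrm T P l (fun t ω => ∑ i ∈ s, f i t ω) ≤ ∑ i ∈ s, nrm T P l (f i) := by
  classical
  induction s using Finset.cons_induction with
  | empty => simp only [Finset.sum_empty]; rw [nrm_zero]
  | cons a s ha ih =>
      simp only [Finset.sum_cons]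
      refine le_trans (nrm_add_le (hf a) ?_) (add_le_add_right ih _)
      exact Finset.measurable_sum s fun i _ =>
        (hf i)

lemma Jl_le_Jl_zero [SFinite P] (hl : 0 ≤ l) (f : ℝ → Ω → ℝ) : Jl T P l f ≤ Jl T P 0 f := by
  refine lintegral_mono_ae ?_
  filter_upwards [ae_fst_mem_Icc T P] with p hp
  rw [wexp_zero]
  exact mul_le_mul_left (wexp_le_one hl hp.1) _

lemma one_le_wexp {t : ℝ} (hl : 0 ≤ l) (ht : t ≤ 0) : 1 ≤ wexp l t := by
  rw [wexp, ← ENNReal.ofReal_one]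
  exact ENNReal.ofReal_le_ofReal (Real.one_le_exp (neg_nonneg.2 (mul_nonpos_of_nonneg_of_nonpos hl ht)))

lemma Jl_zero_le [SFinite P] (hl : 0 ≤ l) (f : ℝ → Ω → ℝ) :
    Jl T P 0 f ≤ wexp l (-T) * Jl T P l f := by
  rw [Jl, Jl, ← lintegral_const_mul' _ _ (wexp_ne_top l (-T))]
  refine lintegral_mono_ae ?_
  filter_upwards [ae_fst_mem_Icc T P] with p hp
  rw [wexp_zero, one_mul, ← mul_assoc, wexp_add]
  have h1 : (1:ℝ≥0∞) ≤ wexp l (-T + p.1) := one_le_wexp hl (by linarith [hp.2])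
  calc (‖f p.1 p.2‖₊ : ℝ≥0∞) ^ 2 = 1 * (‖f p.1 p.2‖₊ : ℝ≥0∞) ^ 2 := (one_mul _).symm
    _ ≤ wexp l (-T + p.1) * (‖f p.1 p.2‖₊ : ℝ≥0∞) ^ 2 := mul_le_mul_left h1 _

lemma Jl_zero_eq (f : ℝ → Ω → ℝ) :
    Jl T P 0 f = ∫⁻ p, (‖f p.1 p.2‖₊ : ℝ≥0∞) ^ 2 ∂((volume.restrict (Icc (0:ℝ) T)).prod P) :=
  lintegral_congr fun p => by rw [wexp_zero, one_mul]

lemma Jl_zero_lt_top_of_sqInt {α : ℝ → Ω → ℝ}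
    (h : _root_.SqInt T P α) : Jl T P 0 α < ∞ := by
  have h2 := h.hasFiniteIntegral
  rw [hasFiniteIntegral_def] at h2
  rw [Jl_zero_eq]
  refine lt_of_le_of_lt (le_of_eq (lintegral_congr fun p => ?_)) h2
  rw [← ENNReal.coe_pow, ← nnnorm_pow]
  rfl

lemma sqInt_of {α : ℝ → Ω → ℝ} (hm : Measurable fun p : ℝ × Ω => α p.1 p.2)
    (hJ : Jl T P 0 α < ∞) : _root_.SqInt T P α := by
  refine ⟨((hm.pow_const 2).aestronglyMeasurable), ?_⟩
  rw [hasFiniteIntegral_def]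
  rw [Jl_zero_eq] at hJ
  refine lt_of_le_of_lt (le_of_eq (lintegral_congr fun p => ?_)) hJ
  rw [← ENNReal.coe_pow, ← nnnorm_pow]
  rfl

end NrmAlg


section CKfacts

lemma lint_sq_ne_top {T : ℝ} {G : ℝ → ℝ → ℝ} (hG : _root_.IsL2Kernel T G) :
    (∫⁻ q, (‖G q.1 q.2‖₊ : ℝ≥0∞) ^ 2
      ∂((volume.restrict (Icc (0:ℝ) T)).prod (volume.restrict (Icc (0:ℝ) T)))) ≠ ∞ := by
  have h2 := hG.2.hasFiniteIntegral
  rw [hasFiniteIntegral_def] at h2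
  refine ne_of_lt (lt_of_le_of_lt (le_of_eq (lintegral_congr fun q => ?_)) h2)
  rw [← ENNReal.coe_pow, ← nnnorm_pow]
  rfl

lemma cK_bound_ptwise {l : ℝ} (hl : 0 ≤ l) {G : ℝ → ℝ → ℝ}
    (hGv : ∀ t s, t ≤ s → G t s = 0) (q : ℝ × ℝ) :
    (‖G q.1 q.2‖₊ : ℝ≥0∞) ^ 2 * wexp l (q.1 - q.2) ≤ (‖G q.1 q.2‖₊ : ℝ≥0∞) ^ 2 := by
  rcases le_or_gt q.1 q.2 with h | h
  · rw [hGv _ _ h]; simp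
  · exact le_trans (mul_le_mul_right (wexp_le_one hl (sub_nonneg.2 h.le)) _)
      (le_of_eq (mul_one _))

lemma cK_lt_top {T l : ℝ} {G : ℝ → ℝ → ℝ} (hG : _root_.IsL2Kernel T G)
    (hGv : ∀ t s, t ≤ s → G t s = 0) (hl : 0 ≤ l) : cK T l G < ∞ := by
  refine lt_of_le_of_lt (lintegral_mono (cK_bound_ptwise hl hGv)) ?_
  exact lt_top_iff_ne_top.2 (lint_sq_ne_top hG)

lemma cK_tendsto {T : ℝ} {G : ℝ → ℝ → ℝ} (hG : _root_.IsL2Kernel T G)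
    (hGv : ∀ t s, t ≤ s → G t s = 0) :
    Tendsto (fun n : ℕ => cK T (n : ℝ) G) atTop (𝓝 0) := by
  have hmeas : ∀ n : ℕ, Measurable fun q : ℝ × ℝ =>
      (‖G q.1 q.2‖₊ : ℝ≥0∞) ^ 2 * wexp (n : ℝ) (q.1 - q.2) := fun n =>
    ((hG.1.nnnorm.coe_nnreal_ennreal).pow_const 2).mul ((measurable_wexp _).comp (measurable_fst.sub measurable_snd))
  have hlim : ∀ q : ℝ × ℝ, Tendsto
      (fun n : ℕ => (‖G q.1 q.2‖₊ : ℝ≥0∞) ^ 2 * wexp (n : ℝ) (q.1 - q.2)) atTop (𝓝 0) := by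
    intro q
    rcases le_or_gt q.1 q.2 with h | h
    · have hz : (fun n : ℕ => (‖G q.1 q.2‖₊ : ℝ≥0∞) ^ 2 * wexp (n : ℝ) (q.1 - q.2))
          = fun _ => 0 := by
        funext n; rw [hGv _ _ h]; simp
      rw [hz]; exact tendsto_const_nhds
    · have hδ : 0 < q.1 - q.2 := sub_pos.2 h
      have hwe : ∀ n : ℕ, wexp (n : ℝ) (q.1 - q.2)
          = (ENNReal.ofReal (Real.exp (-(q.1 - q.2)))) ^ n := by
        intro n
        rw [wexp, ← ENNReal.ofReal_pow (Real.exp_nonneg _), ← Real.exp_nat_mul]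
        have : -((n:ℝ) * (q.1 - q.2)) = (n:ℝ) * -(q.1 - q.2) := by ring
        rw [this]
      have hb1 : ENNReal.ofReal (Real.exp (-(q.1 - q.2))) < 1 := by
        rw [← ENNReal.ofReal_one]
        refine ENNReal.ofReal_lt_ofReal_iff (by norm_num) |>.2 ?_
        rw [← Real.exp_zero]
        exact Real.exp_lt_exp.2 (by linarith)
      have h2 : Tendsto (fun n : ℕ => wexp (n : ℝ) (q.1 - q.2)) atTop (𝓝 0) := by
        have := ENNReal.tendsto_pow_atTop_nhds_zero_of_lt_one hb1
        simpa [hwe] using this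
      have h3 := ENNReal.Tendsto.const_mul h2
        (Or.inr (by simp : ((‖G q.1 q.2‖₊ : ℝ≥0∞) ^ 2) ≠ ⊤))
      simpa using h3
  have h := tendsto_lintegral_of_dominated_convergence
    (μ := (volume.restrict (Icc (0:ℝ) T)).prod (volume.restrict (Icc (0:ℝ) T)))
    (F := fun n q => (‖G q.1 q.2‖₊ : ℝ≥0∞) ^ 2 * wexp (n : ℝ) (q.1 - q.2))
    (f := fun _ => 0)
    (fun q => (‖G q.1 q.2‖₊ : ℝ≥0∞) ^ 2) hmeas
    (fun n => ae_of_all _ (cK_bound_ptwise (Nat.cast_nonneg n) hGv))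
    (lint_sq_ne_top hG) (ae_of_all _ hlim)
  simpa [cK] using h

end CKfacts

section Linearity

variable {T : ℝ} {P : Measure Ω} [SFinite P]

lemma integrable_kernel_section_ae {G : ℝ → ℝ → ℝ}
    (hG : _root_.IsL2Kernel T G) {f : ℝ → Ω → ℝ}
    (hf : Measurable fun p : ℝ × Ω => f p.1 p.2) (hJf : Jl T P 0 f < ∞) :
    ∀ᵐ p ∂((volume.restrict (Icc (0:ℝ) T)).prod P),
      Integrable (fun s => G p.1 s * f s p.2) (volume.restrict (Icc (0:ℝ) T)) := by
  set ν := volume.restrict (Icc (0:ℝ) T) with hν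
  have hGsq : Measurable fun q : ℝ × ℝ => (‖G q.1 q.2‖₊ : ℝ≥0∞) ^ 2 :=
    (hG.1.nnnorm.coe_nnreal_ennreal).pow_const 2
  have hfsq : Measurable fun p : ℝ × Ω => (‖f p.1 p.2‖₊ : ℝ≥0∞) ^ 2 :=
    (hf.nnnorm.coe_nnreal_ennreal).pow_const 2
  have hGfin : ∀ᵐ t ∂ν, (∫⁻ s, (‖G t s‖₊ : ℝ≥0∞) ^ 2 ∂ν) < ∞ := by
    refine ae_lt_top (Measurable.lintegral_prod_right' hGsq) ?_
    rw [← MeasureTheory.lintegral_prod _ (hGsq.aemeasurable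
      (μ := (volume.restrict (Icc (0:ℝ) T)).prod (volume.restrict (Icc (0:ℝ) T))))]
    exact lint_sq_ne_top hG
  have hffin : ∀ᵐ ω ∂P, (∫⁻ s, (‖f s ω‖₊ : ℝ≥0∞) ^ 2 ∂ν) < ∞ := by
    have hswap := MeasureTheory.lintegral_prod_symm _ (hfsq.aemeasurable
      (μ := (volume.restrict (Icc (0:ℝ) T)).prod P))
    refine ae_lt_top (Measurable.lintegral_prod_right'
      (f := fun q : Ω × ℝ => (‖f q.2 q.1‖₊ : ℝ≥0∞) ^ 2)
      (((hf.comp (measurable_snd.prodMk measurable_fst)).nnnorm.coe_nnreal_ennreal).pow_const 2)) ?_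
    rw [← hswap, ← Jl_zero_eq]
    exact hJf.ne
  filter_upwards [ae_fst (P := P) hGfin, ae_snd hffin] with p h1 h2
  constructor
  · exact ((hG.1.of_uncurry_left).mul
      (hf.comp (measurable_id.prodMk measurable_const))).aestronglyMeasurable
  · rw [hasFiniteIntegral_def]
    set a : ℝ → ℝ≥0∞ := fun s => (‖G p.1 s‖₊ : ℝ≥0∞) with ha
    set b : ℝ → ℝ≥0∞ := fun s => (‖f s p.2‖₊ : ℝ≥0∞) with hb
    have hma : AEMeasurable a ν := (hG.1.of_uncurry_left.nnnorm.coe_nnreal_ennreal).aemeasurable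
    have hmb : AEMeasurable b ν :=
      ((hf.comp (measurable_id.prodMk measurable_const)).nnnorm.coe_nnreal_ennreal).aemeasurable
    have hho := ENNReal.lintegral_mul_le_Lp_mul_Lq ν
      Real.HolderConjugate.two_two hma hmb
    have heq : ∀ s, ((‖G p.1 s * f s p.2‖₊ : ℝ≥0∞)) = a s * b s := fun s => by
      rw [nnnorm_mul, ENNReal.coe_mul]
    have hfin1 : (∫⁻ s, a s ^ (2:ℝ) ∂ν) ^ ((1:ℝ)/2) < ∞ := by
      refine ENNReal.rpow_lt_top_of_nonneg (by norm_num) ?_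
      rw [show (fun s => a s ^ (2:ℝ)) = fun s => (‖G p.1 s‖₊ : ℝ≥0∞) ^ 2 from
        funext fun s => (sq_as_rpow _).symm]
      exact h1.ne
    have hfin2 : (∫⁻ s, b s ^ (2:ℝ) ∂ν) ^ ((1:ℝ)/2) < ∞ := by
      refine ENNReal.rpow_lt_top_of_nonneg (by norm_num) ?_
      rw [show (fun s => b s ^ (2:ℝ)) = fun s => (‖f s p.2‖₊ : ℝ≥0∞) ^ 2 from
        funext fun s => (sq_as_rpow _).symm]
      exact h2.ne
    calc ∫⁻ s, (‖G p.1 s * f s p.2‖₊ : ℝ≥0∞) ∂ν = ∫⁻ s, a s * b s ∂ν := lintegral_congr heq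
      _ ≤ (∫⁻ s, a s ^ (2:ℝ) ∂ν) ^ ((1:ℝ)/2) * (∫⁻ s, b s ^ (2:ℝ) ∂ν) ^ ((1:ℝ)/2) := hho
      _ < ∞ := ENNReal.mul_lt_top hfin1 hfin2

lemma AOp_sub_ae {G : ℝ → ℝ → ℝ}
    (hG : _root_.IsL2Kernel T G) {f g : ℝ → Ω → ℝ}
    (hf : Measurable fun p : ℝ × Ω => f p.1 p.2)
    (hg : Measurable fun p : ℝ × Ω => g p.1 p.2)
    (hJf : Jl T P 0 f < ∞) (hJg : Jl T P 0 g < ∞) :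
    ∀ᵐ p ∂((volume.restrict (Icc (0:ℝ) T)).prod P),
      AOp T G f p.1 p.2 - AOp T G g p.1 p.2
        = AOp T G (fun s ω => f s ω - g s ω) p.1 p.2 := by
  filter_upwards [integrable_kernel_section_ae hG hf hJf,
    integrable_kernel_section_ae hG hg hJg] with p h1 h2
  rw [AOp, AOp, AOp, ← integral_sub h1 h2]
  exact integral_congr_ae (ae_of_all _ fun s => (mul_sub _ _ _).symm)

end Linearity


section Restrict

lemma AOp_restrict {T : ℝ} {G : ℝ → ℝ → ℝ} (hGv : ∀ t s, t ≤ s → G t s = 0)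
    (f : ℝ → Ω → ℝ) {t : ℝ} (ht : t ≤ T) (ω : Ω) :
    (∫ s in Icc (0:ℝ) t, G t s * f s ω) = AOp T G f t ω := by
  rw [AOp]
  rcases lt_or_ge t 0 with h | h
  · rw [Icc_eq_empty (by linarith : ¬ (0:ℝ) ≤ t), Measure.restrict_empty, integral_zero_measure]
    have hz : ∫ s in Icc (0:ℝ) T, G t s * f s ω = 0 := by
      rw [setIntegral_congr_fun measurableSet_Icc
        (fun s hs => by
          show G t s * f s ω = 0
          rw [hGv t s (by linarith [hs.1] : t ≤ s), zero_mul] :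
          EqOn (fun s => G t s * f s ω) (fun _ => (0:ℝ)) (Icc (0:ℝ) T))]
      simp
    exact hz.symm
  · have heq : EqOn ((Icc (0:ℝ) t).indicator (fun s => G t s * f s ω))
        (fun s => G t s * f s ω) (Icc (0:ℝ) T) := by
      intro s hs
      by_cases hst : s ∈ Icc (0:ℝ) t
      · rw [indicator_of_mem hst]
      · rw [indicator_of_notMem hst]
        show (0:ℝ) = G t s * f s ω
        rw [hGv t s (le_of_lt (lt_of_not_ge (fun hle => hst ⟨hs.1, hle⟩))), zero_mul]
    calc ∫ s in Icc (0:ℝ) t, G t s * f s ω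
        = ∫ s in Icc (0:ℝ) T ∩ Icc (0:ℝ) t, G t s * f s ω := by
          rw [Icc_inter_Icc, max_self, min_eq_right ht]
      _ = ∫ s in Icc (0:ℝ) T, (Icc (0:ℝ) t).indicator (fun s => G t s * f s ω) s :=
          (setIntegral_indicator measurableSet_Icc).symm
      _ = ∫ s in Icc (0:ℝ) T, G t s * f s ω := setIntegral_congr_fun measurableSet_Icc heq

end Restrict

section System

def wsum {N : ℕ} (w : Fin N → Fin N → ℝ) (X : Fin N → ℝ → Ω → ℝ) (i : Fin N) :
    ℝ → Ω → ℝ := fun t ω => ∑ j, w i j * X j t ω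

def Wc {N : ℕ} (w : Fin N → Fin N → ℝ) (i : Fin N) : ℝ≥0∞ := ∑ j, (‖w i j‖₊ : ℝ≥0∞)

variable {T l : ℝ} {P : Measure Ω} {N : ℕ} {w : Fin N → Fin N → ℝ}

lemma wsum_measurable {X : Fin N → ℝ → Ω → ℝ}
    (hX : ∀ j, Measurable fun p : ℝ × Ω => X j p.1 p.2) (i : Fin N) :
    Measurable fun p : ℝ × Ω => wsum w X i p.1 p.2 := by
  unfold wsum
  exact Finset.measurable_sum _ fun j _ => (hX j).const_mul (w i j)

lemma wsum_nrm_le {X : Fin N → ℝ → Ω → ℝ}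
    (hX : ∀ j, Measurable fun p : ℝ × Ω => X j p.1 p.2) (i : Fin N) :
    nrm T P l (wsum w X i) ≤ Wc w i * ∑ j, nrm T P l (X j) := by
  refine le_trans (nrm_sum_le Finset.univ (fun j => fun t ω => w i j * X j t ω)
    (fun j => (hX j).const_mul (w i j))) ?_
  rw [Wc, Finset.sum_mul]
  refine Finset.sum_le_sum fun j _ => ?_
  rw [nrm_const_mul]
  refine mul_le_mul_right ?_ _
  exact Finset.single_le_sum (f := fun j => nrm T P l (X j)) (fun _ _ => zero_le)
    (Finset.mem_univ j)

lemma wsum_nrm_fin [SFinite P] {X : Fin N → ℝ → Ω → ℝ}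
    (hX : ∀ j, Measurable fun p : ℝ × Ω => X j p.1 p.2)
    (hXf : ∀ j, Jl T P 0 (X j) < ∞) (i : Fin N) : Jl T P 0 (wsum w X i) < ∞ := by
  have h := wsum_nrm_le (T := T) (P := P) (l := 0) (w := w) hX i
  rw [← nrm_lt_top_iff]
  refine lt_of_le_of_lt h ?_
  refine ENNReal.mul_lt_top ?_ ?_
  · rw [Wc]
    exact lt_of_le_of_lt (le_of_eq rfl) (by
      refine (lt_of_le_of_lt (le_refl _) ?_)
      exact ENNReal.sum_lt_top.2 fun j _ => ENNReal.coe_lt_top)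
  · exact ENNReal.sum_lt_top.2 fun j _ => nrm_lt_top_iff.2 (hXf j)

lemma wsum_sub (X Y : Fin N → ℝ → Ω → ℝ) (i : Fin N) :
    (fun t ω => wsum w X i t ω - wsum w Y i t ω)
      = wsum w (fun j t ω => X j t ω - Y j t ω) i := by
  funext t ω
  rw [wsum, wsum, wsum, ← Finset.sum_sub_distrib]
  exact Finset.sum_congr rfl fun j _ => (mul_sub _ _ _).symm

end System


section Contract

variable {T l : ℝ} {P : Measure Ω} {N : ℕ} {w : Fin N → Fin N → ℝ}
  {H K : Fin N → ℝ → ℝ → ℝ}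

def Phi (T : ℝ) (M : Fin N → ℝ → Ω → ℝ) (H K : Fin N → ℝ → ℝ → ℝ) (w : Fin N → Fin N → ℝ)
    (X : Fin N → ℝ → Ω → ℝ) : Fin N → ℝ → Ω → ℝ :=
  fun i t ω => M i t ω + AOp T (H i) (X i) t ω + AOp T (K i) (wsum w X i) t ω

def rhoC (T l : ℝ) (H K : Fin N → ℝ → ℝ → ℝ) (w : Fin N → Fin N → ℝ) : ℝ≥0∞ :=
  ∑ i, ((cK T l (H i)) ^ ((1:ℝ)/2) + (cK T l (K i)) ^ ((1:ℝ)/2) * Wc w i)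

lemma Wc_ne_top (w : Fin N → Fin N → ℝ) (i : Fin N) : Wc w i ≠ ∞ := by
  rw [Wc]
  exact (ENNReal.sum_lt_top.2 fun j _ => ENNReal.coe_lt_top).ne

lemma diff_bound [SFinite P]
    (hH : ∀ i, _root_.IsVolterraKernel T (H i)) (hK : ∀ i, _root_.IsVolterraKernel T (K i))
    {U V : Fin N → ℝ → Ω → ℝ}
    (hUm : ∀ j, Measurable fun p : ℝ × Ω => U j p.1 p.2)
    (hVm : ∀ j, Measurable fun p : ℝ × Ω => V j p.1 p.2)
    (hUf : ∀ j, Jl T P 0 (U j) < ∞) (hVf : ∀ j, Jl T P 0 (V j) < ∞) (i : Fin N) :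
    nrm T P l (fun t ω => (AOp T (H i) (U i) t ω + AOp T (K i) (wsum w U i) t ω)
        - (AOp T (H i) (V i) t ω + AOp T (K i) (wsum w V i) t ω))
      ≤ (cK T l (H i)) ^ ((1:ℝ)/2) * nrm T P l (fun t ω => U i t ω - V i t ω)
        + (cK T l (K i)) ^ ((1:ℝ)/2) *
            (Wc w i * ∑ j, nrm T P l (fun t ω => U j t ω - V j t ω)) := by
  set D : Fin N → ℝ → Ω → ℝ := fun j t ω => U j t ω - V j t ω with hD
  have hDm : ∀ j, Measurable fun p : ℝ × Ω => D j p.1 p.2 := fun j => (hUm j).sub (hVm j)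
  have e1 := AOp_sub_ae (hH i).1 (hUm i) (hVm i) (hUf i) (hVf i)
  have e2 := AOp_sub_ae (hK i).1 (wsum_measurable (w := w) hUm i)
    (wsum_measurable (w := w) hVm i)
    (wsum_nrm_fin (w := w) hUm hUf i) (wsum_nrm_fin (w := w) hVm hVf i)
  have hcong : (fun p : ℝ × Ω => ((AOp T (H i) (U i) p.1 p.2 + AOp T (K i) (wsum w U i) p.1 p.2)
        - (AOp T (H i) (V i) p.1 p.2 + AOp T (K i) (wsum w V i) p.1 p.2)))
      =ᵐ[(volume.restrict (Icc (0:ℝ) T)).prod P]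
      fun p => AOp T (H i) (D i) p.1 p.2 + AOp T (K i) (wsum w D i) p.1 p.2 := by
    filter_upwards [e1, e2] with p h1 h2
    have hr : (AOp T (H i) (U i) p.1 p.2 + AOp T (K i) (wsum w U i) p.1 p.2)
        - (AOp T (H i) (V i) p.1 p.2 + AOp T (K i) (wsum w V i) p.1 p.2)
        = (AOp T (H i) (U i) p.1 p.2 - AOp T (H i) (V i) p.1 p.2)
          + (AOp T (K i) (wsum w U i) p.1 p.2 - AOp T (K i) (wsum w V i) p.1 p.2) := by ring
    rw [hr, h1, h2]
    congr 1
    rw [show (fun s ω => wsum w U i s ω - wsum w V i s ω) = wsum w D i from wsum_sub U V i]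
  rw [nrm_congr_ae (g := fun t ω => AOp T (H i) (D i) t ω + AOp T (K i) (wsum w D i) t ω) hcong]
  refine le_trans (nrm_add_le (measurable_AOp (hH i).1.1 (hDm i))
    (measurable_AOp (hK i).1.1 (wsum_measurable hDm i))) ?_
  refine add_le_add (nrm_AOp_le (hH i).1.1 (hDm i)) ?_
  refine le_trans (nrm_AOp_le (hK i).1.1 (wsum_measurable hDm i)) ?_
  exact mul_le_mul_right (wsum_nrm_le hDm i) _

lemma sum_diff_bound [SFinite P]
    (hH : ∀ i, _root_.IsVolterraKernel T (H i)) (hK : ∀ i, _root_.IsVolterraKernel T (K i))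
    {U V : Fin N → ℝ → Ω → ℝ}
    (hUm : ∀ j, Measurable fun p : ℝ × Ω => U j p.1 p.2)
    (hVm : ∀ j, Measurable fun p : ℝ × Ω => V j p.1 p.2)
    (hUf : ∀ j, Jl T P 0 (U j) < ∞) (hVf : ∀ j, Jl T P 0 (V j) < ∞) :
    (∑ i, nrm T P l (fun t ω => (AOp T (H i) (U i) t ω + AOp T (K i) (wsum w U i) t ω)
        - (AOp T (H i) (V i) t ω + AOp T (K i) (wsum w V i) t ω)))
      ≤ rhoC T l H K w * ∑ j, nrm T P l (fun t ω => U j t ω - V j t ω) := by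
  refine le_trans (Finset.sum_le_sum fun i _ => diff_bound hH hK hUm hVm hUf hVf i) ?_
  rw [rhoC, Finset.sum_mul]
  refine Finset.sum_le_sum fun i _ => ?_
  rw [add_mul]
  refine add_le_add (mul_le_mul_right ?_ _) (le_of_eq (mul_assoc _ _ _).symm)
  exact Finset.single_le_sum (f := fun j => nrm T P l (fun t ω => U j t ω - V j t ω))
    (fun _ _ => zero_le) (Finset.mem_univ i)

lemma rhoC_tendsto (hH : ∀ i, _root_.IsVolterraKernel T (H i))
    (hK : ∀ i, _root_.IsVolterraKernel T (K i)) :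
    Tendsto (fun n : ℕ => rhoC T (n : ℝ) H K w) atTop (𝓝 0) := by
  have hterm : ∀ i : Fin N, Tendsto (fun n : ℕ => (cK T (n:ℝ) (H i)) ^ ((1:ℝ)/2)
      + (cK T (n:ℝ) (K i)) ^ ((1:ℝ)/2) * Wc w i) atTop (𝓝 0) := by
    intro i
    have h1 : Tendsto (fun n : ℕ => (cK T (n:ℝ) (H i)) ^ ((1:ℝ)/2)) atTop (𝓝 0) := by
      have := (ENNReal.continuous_rpow_const (y := (1:ℝ)/2)).tendsto 0
      have h2 := this.comp (cK_tendsto (hH i).1 (hH i).2)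
      simpa [ENNReal.zero_rpow_of_pos (by norm_num : (0:ℝ) < 1/2), Function.comp_def] using h2
    have h2 : Tendsto (fun n : ℕ => (cK T (n:ℝ) (K i)) ^ ((1:ℝ)/2) * Wc w i) atTop (𝓝 0) := by
      have h3 : Tendsto (fun n : ℕ => (cK T (n:ℝ) (K i)) ^ ((1:ℝ)/2)) atTop (𝓝 0) := by
        have := (ENNReal.continuous_rpow_const (y := (1:ℝ)/2)).tendsto 0
        have h4 := this.comp (cK_tendsto (hK i).1 (hK i).2)
        simpa [ENNReal.zero_rpow_of_pos (by norm_num : (0:ℝ) < 1/2), Function.comp_def] using h4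
      have h5 := ENNReal.Tendsto.mul_const h3 (Or.inr (Wc_ne_top w i))
      simpa using h5
    simpa using h1.add h2
  have := tendsto_finset_sum Finset.univ (fun i _ => hterm i)
  simpa [rhoC] using this

end Contract


section MoreHelpers

variable {T l : ℝ} {P : Measure Ω}

lemma rpow_two_then_half (x : ℝ≥0∞) : (x ^ (2:ℝ)) ^ ((1:ℝ)/2) = x := by
  rw [← ENNReal.rpow_mul]; norm_num

lemma Jl_zero_fun : Jl T P l (fun _ _ => (0:ℝ)) = 0 := by
  rw [Jl]; simp

lemma nrm_sub_le {f g : ℝ → Ω → ℝ}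
    (hf : Measurable fun p : ℝ × Ω => f p.1 p.2)
    (hg : Measurable fun p : ℝ × Ω => g p.1 p.2) :
    nrm T P l (fun t ω => f t ω - g t ω) ≤ nrm T P l f + nrm T P l g := by
  have he : (fun t ω => f t ω - g t ω) = fun t ω => f t ω + (-1 : ℝ) * g t ω := by
    funext t ω; ring
  rw [he]
  refine le_trans (nrm_add_le hf (hg.const_mul _)) ?_
  rw [nrm_const_mul]
  simp

lemma nrm_sub_rev (f g : ℝ → Ω → ℝ) :
    nrm T P l (fun t ω => f t ω - g t ω) = nrm T P l (fun t ω => g t ω - f t ω) := by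
  rw [nrm, nrm]
  congr 1
  refine lintegral_congr fun p => ?_
  dsimp only
  rw [show f p.1 p.2 - g p.1 p.2 = -(g p.1 p.2 - f p.1 p.2) from by ring, nnnorm_neg]

lemma lint_le_L2 {α : Type} [MeasurableSpace α] {μ : Measure α} {g : α → ℝ≥0∞}
    (hg : AEMeasurable g μ) :
    ∫⁻ a, g a ∂μ ≤ (∫⁻ a, g a ^ (2:ℝ) ∂μ) ^ ((1:ℝ)/2) * (μ univ) ^ ((1:ℝ)/2) := by
  have h := ENNReal.lintegral_mul_le_Lp_mul_Lq μ
    Real.HolderConjugate.two_two hg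
    (aemeasurable_const (b := (1:ℝ≥0∞)))
  simpa using h

lemma ae_eq_of_nrm_eq_zero {f g : ℝ → Ω → ℝ}
    (hf : Measurable fun p : ℝ × Ω => f p.1 p.2)
    (hg : Measurable fun p : ℝ × Ω => g p.1 p.2)
    (h : nrm T P l (fun t ω => f t ω - g t ω) = 0) :
    (fun p : ℝ × Ω => f p.1 p.2) =ᵐ[(volume.restrict (Icc (0:ℝ) T)).prod P]
      fun p => g p.1 p.2 := by
  have hJ : Jl T P l (fun t ω => f t ω - g t ω) = 0 := nrm_eq_zero_iff.1 h
  rw [Jl] at hJ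
  have hm : Measurable fun p : ℝ × Ω =>
      wexp l p.1 * (‖f p.1 p.2 - g p.1 p.2‖₊ : ℝ≥0∞) ^ 2 :=
    ((measurable_wexp l).comp measurable_fst).mul (((hf.sub hg).nnnorm.coe_nnreal_ennreal).pow_const 2)
  have := (lintegral_eq_zero_iff' hm.aemeasurable).1 hJ
  filter_upwards [this] with p hp
  have hp' : wexp l p.1 * (‖f p.1 p.2 - g p.1 p.2‖₊ : ℝ≥0∞) ^ 2 = 0 := hp
  rcases mul_eq_zero.1 hp' with h1 | h2
  · exact absurd h1 (wexp_ne_zero l p.1)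
  · have h3 : (‖f p.1 p.2 - g p.1 p.2‖₊ : ℝ≥0∞) = 0 := by
      exact pow_eq_zero_iff (by norm_num) |>.1 h2
    have h4 : ‖f p.1 p.2 - g p.1 p.2‖₊ = 0 := by exact_mod_cast h3
    have h5 : f p.1 p.2 - g p.1 p.2 = 0 := by
      rwa [nnnorm_eq_zero] at h4
    exact sub_eq_zero.1 h5

end MoreHelpers


section Cores

variable {T : ℝ} {P : Measure Ω} [IsProbabilityMeasure P] {N : ℕ}
  {w : Fin N → Fin N → ℝ} {H K : Fin N → ℝ → ℝ → ℝ}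

lemma exist_core (F : Filtration ℝ mΩ)
    (hH : ∀ i, _root_.IsVolterraKernel T (H i)) (hK : ∀ i, _root_.IsVolterraKernel T (K i))
    {M : Fin N → ℝ → Ω → ℝ}
    (hMm : ∀ i, Measurable fun p : ℝ × Ω => M i p.1 p.2)
    (hMp : ∀ i, ProgMeasurable F (M i))
    (hMf : ∀ i, Jl T P 0 (M i) < ∞) :
    ∃ X : Fin N → ℝ → Ω → ℝ,
      (∀ i, Measurable fun p : ℝ × Ω => X i p.1 p.2) ∧ (∀ i, ProgMeasurable F (X i)) ∧
      (∀ i, Jl T P 0 (X i) < ∞) ∧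
      ∀ i, (fun p : ℝ × Ω => X i p.1 p.2) =ᵐ[(volume.restrict (Icc (0:ℝ) T)).prod P]
        fun p => Phi T M H K w X i p.1 p.2 := by
  classical
  obtain ⟨n0, hρ1⟩ : ∃ n : ℕ, rhoC T (n:ℝ) H K w < 1 :=
    ((rhoC_tendsto (T := T) (w := w) hH hK).eventually_lt_const
      (by norm_num : (0:ℝ≥0∞) < 1)).exists
  set l : ℝ := (n0 : ℝ) with hldef
  have hl0 : (0:ℝ) ≤ l := Nat.cast_nonneg _
  set ρ : ℝ≥0∞ := rhoC T l H K w with hρdef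
  have hρtop : ρ ≠ ∞ := (hρ1.trans ENNReal.one_lt_top).ne
  set Z : ℕ → Fin N → ℝ → Ω → ℝ :=
    fun n => Nat.rec (fun _ _ _ => 0) (fun _ prev => Phi T M H K w prev) n with hZdef
  have hZ0 : ∀ i t ω, Z 0 i t ω = 0 := fun _ _ _ => rfl
  have hmeas : ∀ n i, Measurable fun p : ℝ × Ω => Z n i p.1 p.2 := by
    intro n
    induction n with
    | zero => exact fun i => measurable_const
    | succ n ih =>
        intro i
        show Measurable fun p : ℝ × Ω => M i p.1 p.2 + AOp T (H i) (Z n i) p.1 p.2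
          + AOp T (K i) (wsum w (Z n) i) p.1 p.2
        exact ((hMm i).add (measurable_AOp (hH i).1.1 (ih i))).add
          (measurable_AOp (hK i).1.1 (wsum_measurable ih i))
  have hprog : ∀ n i, ProgMeasurable F (Z n i) := by
    intro n
    induction n with
    | zero => exact fun i => progMeasurable_const F 0
    | succ n ih =>
        intro i
        show ProgMeasurable F (fun t ω => M i t ω + AOp T (H i) (Z n i) t ω
          + AOp T (K i) (wsum w (Z n) i) t ω)
        refine ProgMeasurable.add (ProgMeasurable.add (hMp i) ?_) ?_
        · exact progMeasurable_AOp (hH i).1.1 (hH i).2 (ih i)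
        · refine progMeasurable_AOp (hK i).1.1 (hK i).2 ?_
          show ProgMeasurable F (fun t ω => ∑ j, w i j * Z n j t ω)
          exact ProgMeasurable.finset_sum fun j _ =>
            (progMeasurable_const F (w i j)).mul (ih j)
  have hfinl : ∀ n i, Jl T P 0 (Z n i) < ∞ := by
    intro n
    induction n with
    | zero =>
        intro i
        rw [show Z 0 i = fun _ _ => (0:ℝ) from rfl, Jl_zero_fun]
        simp
    | succ n ih =>
        intro i
        rw [← nrm_lt_top_iff]
        have h1 : nrm T P 0 (Z (n+1) i)
            ≤ (nrm T P 0 (M i) + nrm T P 0 (AOp T (H i) (Z n i)))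
              + nrm T P 0 (AOp T (K i) (wsum w (Z n) i)) := by
          have he : nrm T P 0 (Z (n+1) i) = nrm T P 0 (fun t ω =>
              (M i t ω + AOp T (H i) (Z n i) t ω) + AOp T (K i) (wsum w (Z n) i) t ω) := rfl
          rw [he]
          refine le_trans (nrm_add_le ((hMm i).add (measurable_AOp (hH i).1.1 (hmeas n i)))
            (measurable_AOp (hK i).1.1 (wsum_measurable (hmeas n) i))) ?_
          exact add_le_add_left
            (nrm_add_le (hMm i) (measurable_AOp (hH i).1.1 (hmeas n i))) _
        have h2 : nrm T P 0 (M i) < ∞ := nrm_lt_top_iff.2 (hMf i)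
        have h3 : nrm T P 0 (AOp T (H i) (Z n i)) < ∞ := by
          refine lt_of_le_of_lt (nrm_AOp_le (hH i).1.1 (hmeas n i)) ?_
          exact ENNReal.mul_lt_top
            (ENNReal.rpow_lt_top_of_nonneg (by norm_num)
              (cK_lt_top (hH i).1 (hH i).2 le_rfl).ne)
            (nrm_lt_top_iff.2 (ih i))
        have h4 : nrm T P 0 (AOp T (K i) (wsum w (Z n) i)) < ∞ := by
          refine lt_of_le_of_lt (nrm_AOp_le (hK i).1.1 (wsum_measurable (hmeas n) i)) ?_
          exact ENNReal.mul_lt_top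
            (ENNReal.rpow_lt_top_of_nonneg (by norm_num)
              (cK_lt_top (hK i).1 (hK i).2 le_rfl).ne)
            (nrm_lt_top_iff.2 (wsum_nrm_fin (hmeas n) ih i))
        exact lt_of_le_of_lt h1
          (ENNReal.add_lt_top.2 ⟨ENNReal.add_lt_top.2 ⟨h2, h3⟩, h4⟩)
  have htel : ∀ n (i : Fin N) t ω, Z n i t ω
      = ∑ k ∈ Finset.range n, (Z (k+1) i t ω - Z k i t ω) := by
    intro n i t ω
    induction n with
    | zero => simp [hZ0]
    | succ n ih => rw [Finset.sum_range_succ, ← ih]; ring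
  set S : ℕ → ℝ≥0∞ :=
    fun n => ∑ i, nrm T P l (fun t ω => Z (n+1) i t ω - Z n i t ω) with hSdef
  have hSrec : ∀ n, S (n+1) ≤ ρ * S n := by
    intro n
    have he : ∀ i : Fin N, (fun t ω => Z (n+2) i t ω - Z (n+1) i t ω)
        = fun t ω => (AOp T (H i) (Z (n+1) i) t ω + AOp T (K i) (wsum w (Z (n+1)) i) t ω)
            - (AOp T (H i) (Z n i) t ω + AOp T (K i) (wsum w (Z n) i) t ω) := by
      intro i; funext t ω
      show (M i t ω + AOp T (H i) (Z (n+1) i) t ω + AOp T (K i) (wsum w (Z (n+1)) i) t ω)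
          - (M i t ω + AOp T (H i) (Z n i) t ω + AOp T (K i) (wsum w (Z n) i) t ω) = _
      ring
    calc S (n+1) = ∑ i, nrm T P l (fun t ω =>
          (AOp T (H i) (Z (n+1) i) t ω + AOp T (K i) (wsum w (Z (n+1)) i) t ω)
            - (AOp T (H i) (Z n i) t ω + AOp T (K i) (wsum w (Z n) i) t ω)) :=
        Finset.sum_congr rfl fun i _ => by rw [he i]
      _ ≤ ρ * S n := sum_diff_bound hH hK (hmeas (n+1)) (hmeas n) (hfinl (n+1)) (hfinl n)
  have hSle : ∀ n, S n ≤ ρ ^ n * S 0 := by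
    intro n
    induction n with
    | zero => simp
    | succ n ih =>
        calc S (n+1) ≤ ρ * S n := hSrec n
          _ ≤ ρ * (ρ ^ n * S 0) := mul_le_mul_right ih _
          _ = ρ ^ (n+1) * S 0 := by ring
  have hS0top : S 0 ≠ ∞ := by
    rw [hSdef]
    refine (ENNReal.sum_lt_top.2 fun i _ => ?_).ne
    refine lt_of_le_of_lt (nrm_sub_le (hmeas 1 i) (hmeas 0 i)) ?_
    refine ENNReal.add_lt_top.2 ⟨?_, ?_⟩
    · exact nrm_lt_top_iff.2 (lt_of_le_of_lt (Jl_le_Jl_zero hl0 _) (hfinl 1 i))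
    · exact nrm_lt_top_iff.2 (lt_of_le_of_lt (Jl_le_Jl_zero hl0 _) (hfinl 0 i))
  have hnrmD : ∀ n i, nrm T P l (fun t ω => Z (n+1) i t ω - Z n i t ω) ≤ ρ ^ n * S 0 :=
    fun n i => le_trans (Finset.single_le_sum
      (f := fun i => nrm T P l (fun t ω => Z (n+1) i t ω - Z n i t ω))
      (fun _ _ => zero_le) (Finset.mem_univ i)) (hSle n)
  set μ := (volume.restrict (Icc (0:ℝ) T)).prod P with hμdef
  have hμuniv : μ univ ≠ ∞ := by
    rw [hμdef, ← univ_prod_univ, Measure.prod_prod, Measure.restrict_apply_univ,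
      Real.volume_Icc]
    simp
  have hgeom : (∑' n : ℕ, ρ ^ n) = (1 - ρ)⁻¹ := ENNReal.tsum_geometric ρ
  have hinvtop : (1 - ρ)⁻¹ ≠ ∞ := by
    rw [Ne, ENNReal.inv_eq_top]
    exact (tsub_pos_iff_lt.2 hρ1).ne'
  set Econst : ℕ → ℝ≥0∞ := fun n => ρ ^ n * S 0 * (1 - ρ)⁻¹ with hEdef
  have hEtop : ∀ n, Econst n ≠ ∞ := fun n =>
    ENNReal.mul_ne_top (ENNReal.mul_ne_top (ENNReal.pow_ne_top hρtop) hS0top) hinvtop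
  have hEtend : Tendsto Econst atTop (𝓝 0) := by
    have h1 : Tendsto (fun n : ℕ => ρ ^ n) atTop (𝓝 0) :=
      ENNReal.tendsto_pow_atTop_nhds_zero_of_lt_one hρ1
    have h2 := ENNReal.Tendsto.mul_const h1 (Or.inr hS0top)
    have h3 := ENNReal.Tendsto.mul_const h2 (Or.inr hinvtop)
    simpa [hEdef] using h3
  have haelim : ∀ i, ∀ᵐ p ∂μ, Tendsto (fun n => Z n i p.1 p.2) atTop
      (𝓝 (liminf (fun n => Z n i p.1 p.2) atTop)) := by
    intro i
    have hDm : ∀ n : ℕ, Measurable fun p : ℝ × Ω =>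
        ((‖Z (n+1) i p.1 p.2 - Z n i p.1 p.2‖₊ : ℝ≥0∞)) :=
      fun n => ((hmeas (n+1) i).sub (hmeas n i)).nnnorm.coe_nnreal_ennreal
    have hsum_fin : ∀ᵐ p ∂μ,
        (∑' n : ℕ, (‖Z (n+1) i p.1 p.2 - Z n i p.1 p.2‖₊ : ℝ≥0∞)) < ∞ := by
      refine ae_lt_top' (AEMeasurable.ennreal_tsum fun n => (hDm n).aemeasurable) ?_
      rw [lintegral_tsum fun n => (hDm n).aemeasurable]
      have hterm : ∀ n : ℕ, (∫⁻ p, (‖Z (n+1) i p.1 p.2 - Z n i p.1 p.2‖₊ : ℝ≥0∞) ∂μ)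
          ≤ ((wexp l (-T)) ^ ((1:ℝ)/2) * (μ univ) ^ ((1:ℝ)/2)) * (ρ ^ n * S 0) := by
        intro n
        refine le_trans (lint_le_L2 ((hDm n).aemeasurable)) ?_
        have h2 : (∫⁻ p, ((‖Z (n+1) i p.1 p.2 - Z n i p.1 p.2‖₊ : ℝ≥0∞)) ^ (2:ℝ) ∂μ)
            = Jl T P 0 (fun t ω => Z (n+1) i t ω - Z n i t ω) := by
          rw [Jl_zero_eq]
          exact lintegral_congr fun p => by rw [← sq_as_rpow]
        have h3 : (∫⁻ p, ((‖Z (n+1) i p.1 p.2 - Z n i p.1 p.2‖₊ : ℝ≥0∞)) ^ (2:ℝ) ∂μ) ^ ((1:ℝ)/2)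
            ≤ (wexp l (-T)) ^ ((1:ℝ)/2) * (ρ ^ n * S 0) := by
          rw [h2]
          refine le_trans (ENNReal.rpow_le_rpow (Jl_zero_le hl0 _) (by norm_num)) ?_
          rw [ENNReal.mul_rpow_of_nonneg _ _ (by norm_num : (0:ℝ) ≤ 1/2)]
          refine mul_le_mul_right ?_ _
          rw [← nrm_def']
          exact hnrmD n i
        calc (∫⁻ p, ((‖Z (n+1) i p.1 p.2 - Z n i p.1 p.2‖₊ : ℝ≥0∞)) ^ (2:ℝ) ∂μ) ^ ((1:ℝ)/2)
              * (μ univ) ^ ((1:ℝ)/2)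
            ≤ ((wexp l (-T)) ^ ((1:ℝ)/2) * (ρ ^ n * S 0)) * (μ univ) ^ ((1:ℝ)/2) :=
              mul_le_mul_left h3 _
          _ = ((wexp l (-T)) ^ ((1:ℝ)/2) * (μ univ) ^ ((1:ℝ)/2)) * (ρ ^ n * S 0) := by ring
      refine (lt_of_le_of_lt (ENNReal.tsum_le_tsum hterm) ?_).ne
      have heq : (∑' n : ℕ, ((wexp l (-T)) ^ ((1:ℝ)/2) * (μ univ) ^ ((1:ℝ)/2)) * (ρ ^ n * S 0))
          = (((wexp l (-T)) ^ ((1:ℝ)/2) * (μ univ) ^ ((1:ℝ)/2)) * S 0) * (1 - ρ)⁻¹ := by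
        rw [← hgeom, ← ENNReal.tsum_mul_left]
        exact tsum_congr fun n => by ring
      rw [heq]
      refine ENNReal.mul_lt_top (ENNReal.mul_lt_top (ENNReal.mul_lt_top ?_ ?_) ?_) ?_
      · exact ENNReal.rpow_lt_top_of_nonneg (by norm_num) (wexp_ne_top _ _)
      · exact ENNReal.rpow_lt_top_of_nonneg (by norm_num) hμuniv
      · exact lt_top_iff_ne_top.2 hS0top
      · exact lt_top_iff_ne_top.2 hinvtop
    filter_upwards [hsum_fin] with p hp
    have he : ∀ n : ℕ, ((‖Z (n+1) i p.1 p.2 - Z n i p.1 p.2‖₊ : ℝ≥0∞)).toReal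
        = |Z (n+1) i p.1 p.2 - Z n i p.1 p.2| := fun n => by
      rw [ENNReal.coe_toReal, coe_nnnorm, Real.norm_eq_abs]
    have hsum1 : Summable fun n : ℕ => |Z (n+1) i p.1 p.2 - Z n i p.1 p.2| :=
      (summable_congr he).1 (ENNReal.summable_toReal hp.ne)
    have hsum : Summable fun n : ℕ => Z (n+1) i p.1 p.2 - Z n i p.1 p.2 :=
      Summable.of_abs hsum1
    have hts := hsum.hasSum.tendsto_sum_nat
    have hZt : Tendsto (fun n => Z n i p.1 p.2) atTop
        (𝓝 (∑' k : ℕ, (Z (k+1) i p.1 p.2 - Z k i p.1 p.2))) :=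
      hts.congr fun n => (htel n i p.1 p.2).symm
    rw [hZt.liminf_eq]
    exact hZt
  set Xf : Fin N → ℝ → Ω → ℝ := fun i t ω => liminf (fun n => Z n i t ω) atTop with hXfdef
  have hXm : ∀ i, Measurable fun p : ℝ × Ω => Xf i p.1 p.2 :=
    fun i => Measurable.liminf fun n => hmeas n i
  have hXp : ∀ i, ProgMeasurable F (Xf i) := by
    intro i r
    apply Measurable.stronglyMeasurable
    exact Measurable.liminf fun n => (hprog n i r).measurable
  have hXconv : ∀ i, ∀ᵐ p ∂μ,
      Tendsto (fun n => Z n i p.1 p.2) atTop (𝓝 (Xf i p.1 p.2)) := haelim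
  have hXZ : ∀ n i, nrm T P l (fun t ω => Xf i t ω - Z n i t ω) ≤ Econst n := by
    intro n i
    have hZmn : ∀ m, n ≤ m →
        nrm T P l (fun t ω => Z m i t ω - Z n i t ω) ≤ Econst n := by
      intro m hnm
      have he : (fun t ω => Z m i t ω - Z n i t ω)
          = fun t ω => ∑ k ∈ Finset.Ico n m, (Z (k+1) i t ω - Z k i t ω) := by
        funext t ω
        rw [Finset.sum_Ico_eq_sub _ hnm, ← htel, ← htel]
      rw [he]
      refine le_trans (nrm_sum_le (Finset.Ico n m) _
        (fun k => (hmeas (k+1) i).sub (hmeas k i))) ?_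
      refine le_trans (Finset.sum_le_sum (fun k _ => hnrmD k i)) ?_
      rw [Finset.sum_Ico_eq_sum_range]
      calc (∑ j ∈ Finset.range (m - n), ρ ^ (n + j) * S 0)
          = ∑ j ∈ Finset.range (m - n), (ρ ^ n * S 0) * ρ ^ j :=
            Finset.sum_congr rfl fun j _ => by rw [pow_add]; ring
        _ ≤ ∑' j : ℕ, (ρ ^ n * S 0) * ρ ^ j := ENNReal.sum_le_tsum _
        _ = (ρ ^ n * S 0) * (1 - ρ)⁻¹ := by rw [ENNReal.tsum_mul_left, hgeom]
        _ = Econst n := rfl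
    have hJliminf : Jl T P l (fun t ω => Xf i t ω - Z n i t ω)
        ≤ liminf (fun m => Jl T P l (fun t ω => Z m i t ω - Z n i t ω)) atTop := by
      have haeq : ∀ᵐ p ∂μ, wexp l p.1 * (‖Xf i p.1 p.2 - Z n i p.1 p.2‖₊ : ℝ≥0∞) ^ 2
          = liminf (fun m => wexp l p.1
              * (‖Z m i p.1 p.2 - Z n i p.1 p.2‖₊ : ℝ≥0∞) ^ 2) atTop := by
        filter_upwards [hXconv i] with p hp
        have h1 : Tendsto (fun m => Z m i p.1 p.2 - Z n i p.1 p.2) atTop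
            (𝓝 (Xf i p.1 p.2 - Z n i p.1 p.2)) := hp.sub_const _
        have h2 : Tendsto (fun m => ((‖Z m i p.1 p.2 - Z n i p.1 p.2‖₊ : ℝ≥0∞))) atTop
            (𝓝 ((‖Xf i p.1 p.2 - Z n i p.1 p.2‖₊ : ℝ≥0∞))) :=
          ((ENNReal.continuous_coe.comp continuous_nnnorm).tendsto _).comp h1
        have h3 := ((ENNReal.continuous_pow 2).tendsto _).comp h2
        have h4 := ENNReal.Tendsto.const_mul h3 (Or.inr (wexp_ne_top l p.1))
        exact (h4.liminf_eq).symm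
      calc Jl T P l (fun t ω => Xf i t ω - Z n i t ω)
          = ∫⁻ p, liminf (fun m => wexp l p.1
              * (‖Z m i p.1 p.2 - Z n i p.1 p.2‖₊ : ℝ≥0∞) ^ 2) atTop ∂μ :=
            lintegral_congr_ae haeq
        _ ≤ liminf (fun m => Jl T P l (fun t ω => Z m i t ω - Z n i t ω)) atTop :=
            lintegral_liminf_le fun m => ((measurable_wexp l).comp measurable_fst).mul
              ((((hmeas m i).sub (hmeas n i)).nnnorm.coe_nnreal_ennreal).pow_const 2)
    have hJb : liminf (fun m => Jl T P l (fun t ω => Z m i t ω - Z n i t ω)) atTop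
        ≤ (Econst n) ^ (2:ℝ) := by
      refine liminf_le_of_frequently_le' ?_
      refine ((eventually_ge_atTop n).mono fun m hm => ?_).frequently
      calc Jl T P l (fun t ω => Z m i t ω - Z n i t ω)
          = (nrm T P l (fun t ω => Z m i t ω - Z n i t ω)) ^ (2:ℝ) := (nrm_sq _ _ _ _).symm
        _ ≤ (Econst n) ^ (2:ℝ) := ENNReal.rpow_le_rpow (hZmn m hm) (by norm_num)
    have hfinal := ENNReal.rpow_le_rpow (le_trans hJliminf hJb)
      (by norm_num : (0:ℝ) ≤ 1/2)
    rw [rpow_two_then_half] at hfinal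
    rw [nrm_def']
    exact hfinal
  have hXfl : ∀ i, nrm T P l (Xf i) < ∞ := by
    intro i
    have he : Xf i = fun t ω => Xf i t ω - Z 0 i t ω := by
      funext t ω; rw [hZ0, sub_zero]
    rw [he]
    exact lt_of_le_of_lt (hXZ 0 i) (lt_top_iff_ne_top.2 (hEtop 0))
  have hXf0 : ∀ i, Jl T P 0 (Xf i) < ∞ := by
    intro i
    refine lt_of_le_of_lt (Jl_zero_le hl0 (Xf i)) ?_
    exact ENNReal.mul_lt_top (lt_top_iff_ne_top.2 (wexp_ne_top _ _))
      (nrm_lt_top_iff.1 (hXfl i))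
  refine ⟨Xf, hXm, hXp, hXf0, ?_⟩
  intro i
  have hRm : Measurable fun p : ℝ × Ω => Phi T M H K w Xf i p.1 p.2 := by
    show Measurable fun p : ℝ × Ω => M i p.1 p.2 + AOp T (H i) (Xf i) p.1 p.2
      + AOp T (K i) (wsum w Xf i) p.1 p.2
    exact ((hMm i).add (measurable_AOp (hH i).1.1 (hXm i))).add
      (measurable_AOp (hK i).1.1 (wsum_measurable hXm i))
  have hXsum_bound : ∀ n (j : Fin N),
      nrm T P l (fun t ω => Z n j t ω - Xf j t ω) ≤ Econst n := fun n j => by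
    rw [nrm_sub_rev]; exact hXZ n j
  have hcH : (cK T l (H i)) ^ ((1:ℝ)/2) ≠ ∞ :=
    (ENNReal.rpow_lt_top_of_nonneg (by norm_num) (cK_lt_top (hH i).1 (hH i).2 hl0).ne).ne
  have hcKne : (cK T l (K i)) ^ ((1:ℝ)/2) ≠ ∞ :=
    (ENNReal.rpow_lt_top_of_nonneg (by norm_num) (cK_lt_top (hK i).1 (hK i).2 hl0).ne).ne
  have hkey : ∀ n : ℕ, nrm T P l (fun t ω => Xf i t ω - Phi T M H K w Xf i t ω)
      ≤ Econst (n+1) + (((cK T l (H i)) ^ ((1:ℝ)/2)) * Econst n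
        + ((cK T l (K i)) ^ ((1:ℝ)/2)) * (Wc w i * ((N : ℝ≥0∞) * Econst n))) := by
    intro n
    have he2 : (fun t ω => Xf i t ω - Phi T M H K w Xf i t ω)
        = fun t ω => (Xf i t ω - Z (n+1) i t ω)
            + (Z (n+1) i t ω - Phi T M H K w Xf i t ω) := by
      funext t ω; ring
    have htri : nrm T P l (fun t ω => Xf i t ω - Phi T M H K w Xf i t ω)
        ≤ nrm T P l (fun t ω => Xf i t ω - Z (n+1) i t ω)
          + nrm T P l (fun t ω => Z (n+1) i t ω - Phi T M H K w Xf i t ω) := by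
      rw [he2]
      exact nrm_add_le ((hXm i).sub (hmeas (n+1) i)) ((hmeas (n+1) i).sub hRm)
    refine le_trans htri (add_le_add (hXZ (n+1) i) ?_)
    have he3 : (fun t ω => Z (n+1) i t ω - Phi T M H K w Xf i t ω)
        = fun t ω => (AOp T (H i) (Z n i) t ω + AOp T (K i) (wsum w (Z n) i) t ω)
            - (AOp T (H i) (Xf i) t ω + AOp T (K i) (wsum w Xf i) t ω) := by
      funext t ω
      show (M i t ω + AOp T (H i) (Z n i) t ω + AOp T (K i) (wsum w (Z n) i) t ω)
          - (M i t ω + AOp T (H i) (Xf i) t ω + AOp T (K i) (wsum w Xf i) t ω) = _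
      ring
    rw [he3]
    refine le_trans (diff_bound hH hK (hmeas n) hXm (hfinl n) hXf0 i) ?_
    refine add_le_add (mul_le_mul_right (hXsum_bound n i) _) ?_
    refine mul_le_mul_right (mul_le_mul_right ?_ _) _
    calc (∑ j, nrm T P l (fun t ω => Z n j t ω - Xf j t ω))
        ≤ ∑ _j : Fin N, Econst n := Finset.sum_le_sum fun j _ => hXsum_bound n j
      _ = (N : ℝ≥0∞) * Econst n := by
          rw [Finset.sum_const, Finset.card_univ, Fintype.card_fin, nsmul_eq_mul]
  have hrhs : Tendsto (fun n : ℕ => Econst (n+1) + (((cK T l (H i)) ^ ((1:ℝ)/2)) * Econst n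
      + ((cK T l (K i)) ^ ((1:ℝ)/2)) * (Wc w i * ((N : ℝ≥0∞) * Econst n)))) atTop (𝓝 0) := by
    have h1 : Tendsto (fun n : ℕ => Econst (n+1)) atTop (𝓝 0) :=
      hEtend.comp (tendsto_add_atTop_nat 1)
    have h3 : Tendsto (fun n => (N : ℝ≥0∞) * Econst n) atTop (𝓝 0) := by
      simpa using ENNReal.Tendsto.const_mul hEtend
        (Or.inr (by simp : ((N : ℝ≥0∞)) ≠ ⊤))
    have h4 : Tendsto (fun n => Wc w i * ((N : ℝ≥0∞) * Econst n)) atTop (𝓝 0) := by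
      simpa using ENNReal.Tendsto.const_mul h3 (Or.inr (Wc_ne_top w i))
    have h5 : Tendsto (fun n => ((cK T l (K i)) ^ ((1:ℝ)/2))
        * (Wc w i * ((N : ℝ≥0∞) * Econst n))) atTop (𝓝 0) := by
      simpa using ENNReal.Tendsto.const_mul h4 (Or.inr hcKne)
    have h6 : Tendsto (fun n => ((cK T l (H i)) ^ ((1:ℝ)/2)) * Econst n) atTop (𝓝 0) := by
      simpa using ENNReal.Tendsto.const_mul hEtend (Or.inr hcH)
    simpa using h1.add (h6.add h5)
  have hzero : nrm T P l (fun t ω => Xf i t ω - Phi T M H K w Xf i t ω) = 0 :=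
    le_antisymm (ge_of_tendsto' hrhs hkey) (zero_le)
  exact ae_eq_of_nrm_eq_zero (hXm i) hRm hzero


lemma uniq_core
    (hH : ∀ i, _root_.IsVolterraKernel T (H i)) (hK : ∀ i, _root_.IsVolterraKernel T (K i))
    {M X Y : Fin N → ℝ → Ω → ℝ}
    (hXm : ∀ i, Measurable fun p : ℝ × Ω => X i p.1 p.2)
    (hYm : ∀ i, Measurable fun p : ℝ × Ω => Y i p.1 p.2)
    (hXf : ∀ i, Jl T P 0 (X i) < ∞) (hYf : ∀ i, Jl T P 0 (Y i) < ∞)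
    (hXe : ∀ i, (fun p : ℝ × Ω => X i p.1 p.2) =ᵐ[(volume.restrict (Icc (0:ℝ) T)).prod P]
      fun p => Phi T M H K w X i p.1 p.2)
    (hYe : ∀ i, (fun p : ℝ × Ω => Y i p.1 p.2) =ᵐ[(volume.restrict (Icc (0:ℝ) T)).prod P]
      fun p => Phi T M H K w Y i p.1 p.2) :
    ∀ i, (fun p : ℝ × Ω => X i p.1 p.2) =ᵐ[(volume.restrict (Icc (0:ℝ) T)).prod P]
      fun p => Y i p.1 p.2 := by
  obtain ⟨n0, hρ1⟩ : ∃ n : ℕ, rhoC T (n:ℝ) H K w < 1 :=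
    ((rhoC_tendsto (T := T) (w := w) hH hK).eventually_lt_const
      (by norm_num : (0:ℝ≥0∞) < 1)).exists
  set l : ℝ := (n0 : ℝ) with hldef
  have hl0 : (0:ℝ) ≤ l := Nat.cast_nonneg _
  set ρ : ℝ≥0∞ := rhoC T l H K w with hρdef
  set Sd : ℝ≥0∞ := ∑ i, nrm T P l (fun t ω => X i t ω - Y i t ω) with hSd
  have hSfin : Sd ≠ ∞ := by
    rw [hSd]
    refine (ENNReal.sum_lt_top.2 fun i _ => ?_).ne
    refine lt_of_le_of_lt (nrm_sub_le (hXm i) (hYm i)) ?_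
    refine ENNReal.add_lt_top.2 ⟨?_, ?_⟩
    · exact nrm_lt_top_iff.2 (lt_of_le_of_lt (Jl_le_Jl_zero hl0 _) (hXf i))
    · exact nrm_lt_top_iff.2 (lt_of_le_of_lt (Jl_le_Jl_zero hl0 _) (hYf i))
  have hstep : Sd ≤ ρ * Sd := by
    have hcongr : ∀ i : Fin N, nrm T P l (fun t ω => X i t ω - Y i t ω)
        = nrm T P l (fun t ω => (AOp T (H i) (X i) t ω + AOp T (K i) (wsum w X i) t ω)
            - (AOp T (H i) (Y i) t ω + AOp T (K i) (wsum w Y i) t ω)) := by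
      intro i
      refine nrm_congr_ae (g := fun t ω =>
        (AOp T (H i) (X i) t ω + AOp T (K i) (wsum w X i) t ω)
          - (AOp T (H i) (Y i) t ω + AOp T (K i) (wsum w Y i) t ω)) ?_
      filter_upwards [hXe i, hYe i] with p h1 h2
      rw [h1, h2]
      show (M i p.1 p.2 + AOp T (H i) (X i) p.1 p.2 + AOp T (K i) (wsum w X i) p.1 p.2)
          - (M i p.1 p.2 + AOp T (H i) (Y i) p.1 p.2 + AOp T (K i) (wsum w Y i) p.1 p.2) = _
      ring
    calc Sd = ∑ i, nrm T P l (fun t ω =>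
          (AOp T (H i) (X i) t ω + AOp T (K i) (wsum w X i) t ω)
            - (AOp T (H i) (Y i) t ω + AOp T (K i) (wsum w Y i) t ω)) :=
        Finset.sum_congr rfl fun i _ => hcongr i
      _ ≤ ρ * Sd := sum_diff_bound hH hK hXm hYm hXf hYf
  have hSd0 : Sd = 0 := by
    by_contra hne
    have hlt : ρ * Sd < 1 * Sd := ENNReal.mul_lt_mul_left hne hSfin hρ1
    rw [one_mul] at hlt
    exact lt_irrefl _ (lt_of_le_of_lt hstep hlt)
  intro i
  have hzero : nrm T P l (fun t ω => X i t ω - Y i t ω) = 0 := by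
    rw [hSd] at hSd0
    exact (Finset.sum_eq_zero_iff.1 hSd0) i (Finset.mem_univ i)
  exact ae_eq_of_nrm_eq_zero (hXm i) (hYm i) hzero

end Cores

end VolAux

section MainProof
open VolAux
open scoped ENNReal NNReal Topology

theorem volterra_system_exists_unique'
    {Ω : Type} {mΩ : MeasurableSpace Ω} (P : Measure Ω) [IsProbabilityMeasure P]
    (F : Filtration ℝ mΩ) (T : ℝ) (hT : 0 < T) (N : ℕ)
    (w : Fin N → Fin N → ℝ) (hw : ∀ i j, 0 ≤ w i j)
    (M : Fin N → ℝ → Ω → ℝ)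
    (hM : ∀ i, ProgMeasurable F (M i) ∧ SqInt T P (M i))
    (H K : Fin N → ℝ → ℝ → ℝ)
    (hH : ∀ i, IsVolterraKernel T (H i)) (hK : ∀ i, IsVolterraKernel T (K i)) :
    ∃ X : Fin N → ℝ → Ω → ℝ,
      ((∀ i, ProgMeasurable F (X i)) ∧
        Integrable (fun p : ℝ × Ω => ∑ i, (X i p.1 p.2) ^ 2)
          ((volume.restrict (Icc (0:ℝ) T)).prod P) ∧
        ∀ i, ∀ᵐ p ∂((volume.restrict (Icc (0:ℝ) T)).prod P),
          X i p.1 p.2 = M i p.1 p.2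
            + (∫ s in Icc (0:ℝ) p.1, H i p.1 s * X i s p.2)
            + ∫ s in Icc (0:ℝ) p.1, K i p.1 s * ∑ j, w i j * X j s p.2) ∧
      ∀ Y : Fin N → ℝ → Ω → ℝ,
        ((∀ i, ProgMeasurable F (Y i)) ∧
          Integrable (fun p : ℝ × Ω => ∑ i, (Y i p.1 p.2) ^ 2)
            ((volume.restrict (Icc (0:ℝ) T)).prod P) ∧
          ∀ i, ∀ᵐ p ∂((volume.restrict (Icc (0:ℝ) T)).prod P),
            Y i p.1 p.2 = M i p.1 p.2
              + (∫ s in Icc (0:ℝ) p.1, H i p.1 s * Y i s p.2)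
              + ∫ s in Icc (0:ℝ) p.1, K i p.1 s * ∑ j, w i j * Y j s p.2) →
        ∀ i, ∀ᵐ p ∂((volume.restrict (Icc (0:ℝ) T)).prod P),
          X i p.1 p.2 = Y i p.1 p.2 := by
  classical
  set μ := (volume.restrict (Icc (0:ℝ) T)).prod P with hμdef
  -- modified drift
  set M' : Fin N → ℝ → Ω → ℝ := fun i t ω => M i (min t T) ω with hM'def
  have hM'm : ∀ i, Measurable fun p : ℝ × Ω => M' i p.1 p.2 :=
    fun i => measurable_minMod (hM i).1 T
  have hM'p : ∀ i, ProgMeasurable F (M' i) :=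
    fun i => progMeasurable_minMod (hM i).1 T
  have hM'ae : ∀ i, (fun p : ℝ × Ω => M' i p.1 p.2) =ᵐ[μ] fun p => M i p.1 p.2 :=
    fun i => minMod_ae_eq T P (M i)
  have hM'f : ∀ i, Jl T P 0 (M' i) < ∞ := by
    intro i
    rw [Jl_congr_ae (hM'ae i)]
    exact Jl_zero_lt_top_of_sqInt (hM i).2
  obtain ⟨X, hXm, hXp, hXf0, hXeq⟩ := exist_core (w := w) F hH hK hM'm hM'p hM'f
  have hsq_int : ∀ (V : Fin N → ℝ → Ω → ℝ),
      (∀ i, Measurable fun p : ℝ × Ω => V i p.1 p.2) → (∀ i, Jl T P 0 (V i) < ∞) →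
      Integrable (fun p : ℝ × Ω => ∑ i, (V i p.1 p.2) ^ 2) μ := by
    intro V hVm hVf
    constructor
    · exact (Finset.measurable_sum _ fun i _ => (hVm i).pow_const 2).aestronglyMeasurable
    · rw [hasFiniteIntegral_def]
      have hb : ∀ p : ℝ × Ω, (‖∑ i, (V i p.1 p.2) ^ 2‖₊ : ℝ≥0∞)
          ≤ ∑ i, (‖V i p.1 p.2‖₊ : ℝ≥0∞) ^ 2 := by
        intro p
        refine le_trans ?_ (le_of_eq rfl)
        calc (‖∑ i, (V i p.1 p.2) ^ 2‖₊ : ℝ≥0∞) ≤ ∑ i, (‖(V i p.1 p.2) ^ 2‖₊ : ℝ≥0∞) := by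
              exact_mod_cast nnnorm_sum_le _ _
          _ = ∑ i, (‖V i p.1 p.2‖₊ : ℝ≥0∞) ^ 2 := by
              refine Finset.sum_congr rfl fun i _ => ?_
              rw [← ENNReal.coe_pow, nnnorm_pow]
      refine lt_of_le_of_lt (lintegral_mono hb) ?_
      rw [lintegral_finset_sum _ fun i _ => ((hVm i).nnnorm.coe_nnreal_ennreal).pow_const 2]
      refine ENNReal.sum_lt_top.2 fun i _ => ?_
      rw [← Jl_zero_eq]
      exact hVf i
  refine ⟨X, ⟨hXp, hsq_int X hXm hXf0, ?_⟩, ?_⟩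
  · -- equation in statement form
    intro i
    filter_upwards [hXeq i, hM'ae i, ae_fst_mem_Icc T P] with p h1 h2 h3
    have hr1 : (∫ s in Icc (0:ℝ) p.1, H i p.1 s * X i s p.2)
        = AOp T (H i) (X i) p.1 p.2 := AOp_restrict (hH i).2 (X i) h3.2 p.2
    have hr2 : (∫ s in Icc (0:ℝ) p.1, K i p.1 s * ∑ j, w i j * X j s p.2)
        = AOp T (K i) (wsum w X i) p.1 p.2 := AOp_restrict (hK i).2 (wsum w X i) h3.2 p.2
    rw [hr1, hr2]
    have h2' : M' i p.1 p.2 = M i p.1 p.2 := h2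
    rw [← h2']
    exact h1
  · -- uniqueness
    rintro Y ⟨hYp, hYint, hYeq⟩ i
    set Y' : Fin N → ℝ → Ω → ℝ := fun j t ω => Y j (min t T) ω with hY'def
    have hY'm : ∀ j, Measurable fun p : ℝ × Ω => Y' j p.1 p.2 :=
      fun j => measurable_minMod (hYp j) T
    have hY'ae : ∀ j, (fun p : ℝ × Ω => Y' j p.1 p.2) =ᵐ[μ] fun p => Y j p.1 p.2 :=
      fun j => minMod_ae_eq T P (Y j)
    have hYf : ∀ j, Jl T P 0 (Y j) < ∞ := by
      intro j
      rw [Jl_zero_eq]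
      have h2 := hYint.hasFiniteIntegral
      rw [hasFiniteIntegral_def] at h2
      refine lt_of_le_of_lt (lintegral_mono fun p => ?_) h2
      rw [← ENNReal.coe_pow, ← nnnorm_pow]
      have hle : |(Y j p.1 p.2) ^ 2| ≤ |∑ k, (Y k p.1 p.2) ^ 2| := by
        rw [abs_of_nonneg (sq_nonneg _), abs_of_nonneg
          (Finset.sum_nonneg fun k _ => sq_nonneg _)]
        exact Finset.single_le_sum (f := fun k => (Y k p.1 p.2) ^ 2)
          (fun k _ => sq_nonneg _) (Finset.mem_univ j)
      rw [Real.enorm_eq_ofReal_abs, ← enorm_eq_nnnorm, Real.enorm_eq_ofReal_abs]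
      exact ENNReal.ofReal_le_ofReal hle
    have hY'f : ∀ j, Jl T P 0 (Y' j) < ∞ := by
      intro j
      rw [Jl_congr_ae (hY'ae j)]
      exact hYf j
    have hY'e : ∀ j, (fun p : ℝ × Ω => Y' j p.1 p.2) =ᵐ[μ]
        fun p => Phi T M' H K w Y' j p.1 p.2 := by
      intro j
      filter_upwards [hYeq j, hM'ae j, ae_fst_mem_Icc T P] with p h1 h2 h3
      have hYY' : Y' j p.1 p.2 = Y j p.1 p.2 := by
        show Y j (min p.1 T) p.2 = Y j p.1 p.2
        rw [min_eq_left h3.2]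
      have hint1 : (∫ s in Icc (0:ℝ) p.1, H j p.1 s * Y j s p.2)
          = AOp T (H j) (Y' j) p.1 p.2 := by
        rw [← AOp_restrict (hH j).2 (Y' j) h3.2 p.2]
        refine setIntegral_congr_fun measurableSet_Icc (fun s hs => ?_)
        show H j p.1 s * Y j s p.2 = H j p.1 s * Y j (min s T) p.2
        rw [min_eq_left (le_trans hs.2 h3.2)]
      have hint2 : (∫ s in Icc (0:ℝ) p.1, K j p.1 s * ∑ k, w j k * Y k s p.2)
          = AOp T (K j) (wsum w Y' j) p.1 p.2 := by
        rw [← AOp_restrict (hK j).2 (wsum w Y' j) h3.2 p.2]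
        refine setIntegral_congr_fun measurableSet_Icc (fun s hs => ?_)
        show K j p.1 s * (∑ k, w j k * Y k s p.2) = K j p.1 s * wsum w Y' j s p.2
        congr 1
        refine Finset.sum_congr rfl fun k _ => ?_
        show w j k * Y k s p.2 = w j k * Y k (min s T) p.2
        rw [min_eq_left (le_trans hs.2 h3.2)]
      have h2' : M' j p.1 p.2 = M j p.1 p.2 := h2
      show Y' j p.1 p.2 = M' j p.1 p.2 + AOp T (H j) (Y' j) p.1 p.2
        + AOp T (K j) (wsum w Y' j) p.1 p.2
      rw [hYY', h2', ← hint1, ← hint2]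
      exact h1
    have huniq := uniq_core (M := M') hH hK hXm hY'm hXf0 hY'f hXeq hY'e
    filter_upwards [huniq i, hY'ae i] with p ha hb
    have ha' : X i p.1 p.2 = Y' i p.1 p.2 := ha
    have hb' : Y' i p.1 p.2 = Y i p.1 p.2 := hb
    rw [ha', hb']

end MainProof

/-- The coupled linear system of stochastic Volterra equations admits
a unique (up to `dℙ⊗dt`-a.e. equality) progressively measurable square-integrable
solution. -/
theorem volterra_system_exists_unique
    {Ω : Type} {mΩ : MeasurableSpace Ω} (P : Measure Ω) [IsProbabilityMeasure P]
    (F : Filtration ℝ mΩ) (T : ℝ) (hT : 0 < T) (N : ℕ)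
    (w : Fin N → Fin N → ℝ) (hw : ∀ i j, 0 ≤ w i j)
    (M : Fin N → ℝ → Ω → ℝ)
    (hM : ∀ i, ProgMeasurable F (M i) ∧ SqInt T P (M i))
    (H K : Fin N → ℝ → ℝ → ℝ)
    (hH : ∀ i, IsVolterraKernel T (H i)) (hK : ∀ i, IsVolterraKernel T (K i)) :
    ∃ X : Fin N → ℝ → Ω → ℝ,
      ((∀ i, ProgMeasurable F (X i)) ∧
        Integrable (fun p : ℝ × Ω => ∑ i, (X i p.1 p.2) ^ 2)
          ((volume.restrict (Icc (0:ℝ) T)).prod P) ∧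
        ∀ i, ∀ᵐ p ∂((volume.restrict (Icc (0:ℝ) T)).prod P),
          X i p.1 p.2 = M i p.1 p.2
            + (∫ s in Icc (0:ℝ) p.1, H i p.1 s * X i s p.2)
            + ∫ s in Icc (0:ℝ) p.1, K i p.1 s * ∑ j, w i j * X j s p.2) ∧
      ∀ Y : Fin N → ℝ → Ω → ℝ,
        ((∀ i, ProgMeasurable F (Y i)) ∧
          Integrable (fun p : ℝ × Ω => ∑ i, (Y i p.1 p.2) ^ 2)
            ((volume.restrict (Icc (0:ℝ) T)).prod P) ∧
          ∀ i, ∀ᵐ p ∂((volume.restrict (Icc (0:ℝ) T)).prod P),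
            Y i p.1 p.2 = M i p.1 p.2
              + (∫ s in Icc (0:ℝ) p.1, H i p.1 s * Y i s p.2)
              + ∫ s in Icc (0:ℝ) p.1, K i p.1 s * ∑ j, w i j * Y j s p.2) →
        ∀ i, ∀ᵐ p ∂((volume.restrict (Icc (0:ℝ) T)).prod P),
          X i p.1 p.2 = Y i p.1 p.2 :=
  volterra_system_exists_unique' P F T hT N w hw M hM H K hH hK
end
end

section
/- For every f∈L²([0,T],ℝ^N): ⟨f,𝚪³f⟩_{L²,N} ≥ −(T/2)·‖Δκ(2I_N − w − Δw)‖·⟨f,f⟩_{L²,N}, where ‖·‖ denotes the Frobenius norm. -/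
open MeasureTheory Set Filter

noncomputable section

variable {Ω : Type}

/-- The kernel `Γ³` from the systemic risk example. -/
def Gamma3 (τ : ℝ) {N : ℕ} (kap : Fin N → ℝ) (w : Fin N → Fin N → ℝ)
    (i j : Fin N) (t s : ℝ) : ℝ :=
  kap i * ((if i = j then 1 else 0) - w i j) * (if 0 < t - s ∧ t - s < τ then 1 else 0)
    + kap i * (if i = j then 1 else 0) * (1 - w i i)
        * (if 0 < s - t ∧ s - t < τ then 1 else 0)


set_option maxHeartbeats 1000000

/-- The symmetrized coefficient matrix `Δκ(2I_N − w − Δw)` entrywise. -/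
def Mmat {N : ℕ} (kap : Fin N → ℝ) (w : Fin N → Fin N → ℝ) (i j : Fin N) : ℝ :=
  kap i * (2 * (if i = j then (1:ℝ) else 0) - w i j - (if i = j then 1 else 0) * w i i)

lemma Mmat_eq {N : ℕ} (kap : Fin N → ℝ) (w : Fin N → Fin N → ℝ) (i j : Fin N) :
    ((Matrix.diagonal kap *
      ((2:ℝ) • (1 : Matrix (Fin N) (Fin N) ℝ) - Matrix.of w
        - Matrix.diagonal (fun i => w i i))) i j) = Mmat kap w i j := by
  rw [Matrix.diagonal_mul]
  simp only [Matrix.sub_apply, Matrix.smul_apply, Matrix.one_apply, Matrix.of_apply,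
    Matrix.diagonal_apply, Mmat, smul_eq_mul]
  rcases eq_or_ne i j with rfl | h
  · simp
  · simp [h]

lemma matCS {N : ℕ} (A : Fin N → Fin N → ℝ) (x y : Fin N → ℝ) :
    |∑ i, ∑ j, x i * A i j * y j| ≤
      Real.sqrt (∑ i, ∑ j, (A i j)^2) * (Real.sqrt (∑ i, (x i)^2) * Real.sqrt (∑ j, (y j)^2)) := by
  set g : Fin N → ℝ := fun i => ∑ j, A i j * y j with hg
  have h0 : ∑ i, ∑ j, x i * A i j * y j = ∑ i, x i * g i := by
    simp [hg, Finset.mul_sum, mul_assoc]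
  rw [h0]
  have h1 : |∑ i, x i * g i| ≤ Real.sqrt ((∑ i, (x i)^2) * (∑ i, (g i)^2)) := by
    rw [← Real.sqrt_sq_eq_abs]
    exact Real.sqrt_le_sqrt (Finset.sum_mul_sq_le_sq_mul_sq _ _ _)
  have h2 : ∑ i, (g i)^2 ≤ (∑ i, ∑ j, (A i j)^2) * (∑ j, (y j)^2) := by
    rw [Finset.sum_mul]
    exact Finset.sum_le_sum fun i _ => Finset.sum_mul_sq_le_sq_mul_sq _ _ _
  calc |∑ i, x i * g i| ≤ Real.sqrt ((∑ i, (x i)^2) * (∑ i, (g i)^2)) := h1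
    _ ≤ Real.sqrt ((∑ i, (x i)^2) * ((∑ i, ∑ j, (A i j)^2) * (∑ j, (y j)^2))) := by
        apply Real.sqrt_le_sqrt
        apply mul_le_mul_of_nonneg_left h2 (by positivity)
    _ = _ := by
        rw [Real.sqrt_mul (by positivity), Real.sqrt_mul (by positivity)]; ring

lemma abs_le_abs_two (a : ℝ) : |a| ≤ |2 * a| := by
  rw [abs_mul, abs_two]; linarith [abs_nonneg a]

lemma gamma3_abs_le (τ : ℝ) {N : ℕ} (kap : Fin N → ℝ) (w : Fin N → Fin N → ℝ)
    (i j : Fin N) (t s : ℝ) : |Gamma3 τ kap w i j t s| ≤ |Mmat kap w i j| := by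
  have hAB : ¬ ((0 < t - s ∧ t - s < τ) ∧ (0 < s - t ∧ s - t < τ)) := by
    rintro ⟨⟨h1, -⟩, ⟨h2, -⟩⟩; linarith
  by_cases hA : 0 < t - s ∧ t - s < τ <;> by_cases hB : 0 < s - t ∧ s - t < τ
  · exact absurd ⟨hA, hB⟩ hAB
  · simp only [Gamma3, Mmat, if_pos hA, if_neg hB]
    rcases eq_or_ne i j with rfl | hij
    · simp only [if_pos rfl]
      calc |kap i * (1 - w i i) * 1 + kap i * 1 * (1 - w i i) * 0|
          = |kap i * (1 - w i i)| := by congr 1; ring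
        _ ≤ |2 * (kap i * (1 - w i i))| := abs_le_abs_two _
        _ = _ := by congr 1; simp only [if_true]; ring
    · simp only [if_neg hij]
      apply le_of_eq; congr 1; ring
  · simp only [Gamma3, Mmat, if_neg hA, if_pos hB]
    rcases eq_or_ne i j with rfl | hij
    · simp only [if_pos rfl]
      calc |kap i * (1 - w i i) * 0 + kap i * 1 * (1 - w i i) * 1|
          = |kap i * (1 - w i i)| := by congr 1; ring
        _ ≤ |2 * (kap i * (1 - w i i))| := abs_le_abs_two _
        _ = _ := by congr 1; simp only [if_true]; ring
    · simp only [if_neg hij]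
      simp [abs_nonneg]; positivity
  · simp only [Gamma3, Mmat, if_neg hA, if_neg hB]
    simp [abs_nonneg]; positivity

lemma gamma3_sym_eq (τ : ℝ) {N : ℕ} (kap : Fin N → ℝ) (w : Fin N → Fin N → ℝ)
    (i j : Fin N) {t s : ℝ} (hA : 0 < t - s ∧ t - s < τ) :
    Gamma3 τ kap w i j t s + Gamma3 τ kap w j i s t = Mmat kap w i j := by
  have hB : ¬ (0 < s - t ∧ s - t < τ) := by rintro ⟨h1, -⟩; linarith [hA.1]
  rcases eq_or_ne i j with rfl | hij
  · simp only [Gamma3, Mmat, if_pos hA, if_neg hB, if_pos rfl]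
    ring
  · simp only [Gamma3, Mmat, if_pos hA, if_neg hB, if_neg hij, if_neg (Ne.symm hij)]
    ring

lemma gamma3_zero (τ : ℝ) {N : ℕ} (kap : Fin N → ℝ) (w : Fin N → Fin N → ℝ)
    (i j : Fin N) {t s : ℝ} (hA : ¬ (0 < t - s ∧ t - s < τ))
    (hB : ¬ (0 < s - t ∧ s - t < τ)) :
    Gamma3 τ kap w i j t s + Gamma3 τ kap w j i s t = 0 := by
  simp only [Gamma3, if_neg hA, if_neg hB]
  ring

lemma gamma3_measurable (τ : ℝ) {N : ℕ} (kap : Fin N → ℝ) (w : Fin N → Fin N → ℝ)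
    (i j : Fin N) : Measurable (fun p : ℝ × ℝ => Gamma3 τ kap w i j p.1 p.2) := by
  unfold Gamma3
  have h1 : MeasurableSet {p : ℝ × ℝ | 0 < p.1 - p.2 ∧ p.1 - p.2 < τ} := by
    have : {p : ℝ × ℝ | 0 < p.1 - p.2 ∧ p.1 - p.2 < τ}
        = (fun p : ℝ × ℝ => p.1 - p.2) ⁻¹' (Ioo 0 τ) := rfl
    rw [this]
    exact (measurable_fst.sub measurable_snd) measurableSet_Ioo
  have h2 : MeasurableSet {p : ℝ × ℝ | 0 < p.2 - p.1 ∧ p.2 - p.1 < τ} := by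
    have : {p : ℝ × ℝ | 0 < p.2 - p.1 ∧ p.2 - p.1 < τ}
        = (fun p : ℝ × ℝ => p.2 - p.1) ⁻¹' (Ioo 0 τ) := rfl
    rw [this]
    exact (measurable_snd.sub measurable_fst) measurableSet_Ioo
  apply Measurable.add
  · exact (measurable_const.mul (Measurable.ite h1 measurable_const measurable_const))
  · exact (measurable_const.mul (Measurable.ite h2 measurable_const measurable_const))

lemma gamma3_measurable_right (τ : ℝ) {N : ℕ} (kap : Fin N → ℝ) (w : Fin N → Fin N → ℝ)
    (i j : Fin N) (t : ℝ) : Measurable (fun s : ℝ => Gamma3 τ kap w i j t s) :=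
  (gamma3_measurable τ kap w i j).comp (measurable_const.prodMk measurable_id)


/-- Lower bound on the quadratic form of `𝚪³` in terms of the
Frobenius norm of `Δκ(2I_N − w − Δw)`. -/
theorem gamma3_lower_bound
    (T : ℝ) (hT : 0 < T) (N : ℕ) (τ : ℝ) (hτ : τ ∈ Icc (0:ℝ) T)
    (kap : Fin N → ℝ) (hkap : ∀ i, 0 ≤ kap i)
    (w : Fin N → Fin N → ℝ) (hw : ∀ i j, 0 ≤ w i j)
    (f : ℝ → Fin N → ℝ) (hf : MemL2N T f) :
    - (T / 2) * Real.sqrt (∑ i, ∑ j,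
        ((Matrix.diagonal kap *
          ((2:ℝ) • (1 : Matrix (Fin N) (Fin N) ℝ) - Matrix.of w
            - Matrix.diagonal (fun i => w i i))) i j) ^ 2)
        * (∫ t in Icc (0:ℝ) T, ∑ i, (f t i) ^ 2)
      ≤ ∫ t in Icc (0:ℝ) T, ∑ i, f t i *
          (∑ j, ∫ s in Icc (0:ℝ) T, Gamma3 τ kap w i j t s * f s j) := by
  obtain ⟨hfm, hfint⟩ := hf
  simp only [Mmat_eq]
  set μ : Measure ℝ := volume.restrict (Icc (0:ℝ) T) with hμdef
  have hμuniv : (μ Set.univ).toReal = T := by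
    simp [hμdef, Real.volume_Icc, ENNReal.toReal_ofReal hT.le]
  haveI : IsFiniteMeasure μ := by
    constructor
    rw [hμdef, Measure.restrict_apply_univ, Real.volume_Icc]
    exact ENNReal.ofReal_lt_top
  set C : ℝ := Real.sqrt (∑ i, ∑ j, (Mmat kap w i j)^2) with hCdef
  have hC0 : 0 ≤ C := Real.sqrt_nonneg _
  set I : ℝ := ∫ t, ∑ i, (f t i)^2 ∂μ with hIdef
  -- integrability of components
  have hsq : ∀ i, Integrable (fun t => (f t i)^2) μ := by
    intro i
    refine hfint.mono' ((hfm i).pow_const 2).aestronglyMeasurable ?_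
    filter_upwards with t
    rw [Real.norm_eq_abs, abs_of_nonneg (sq_nonneg _)]
    exact Finset.single_le_sum (f := fun j => (f t j)^2) (fun j _ => sq_nonneg _)
      (Finset.mem_univ i)
  have hfi : ∀ i, Integrable (fun t => f t i) μ := by
    intro i
    refine ((integrable_const (1:ℝ)).add (hsq i)).mono' (hfm i).aestronglyMeasurable ?_
    filter_upwards with t
    rw [Real.norm_eq_abs]
    simp only [Pi.add_apply]
    nlinarith [abs_nonneg (f t i), sq_abs (f t i)]
  have habs : Integrable (fun t => ∑ i, |f t i|) μ :=
    integrable_finset_sum _ fun i _ => (hfi i).abs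
  -- the product kernel function
  set G : ℝ × ℝ → ℝ :=
    fun p => ∑ i, ∑ j, f p.1 i * Gamma3 τ kap w i j p.1 p.2 * f p.2 j with hGdef
  have hGm : Measurable G := by
    apply Finset.measurable_sum
    intro i _
    apply Finset.measurable_sum
    intro j _
    exact (((hfm i).comp measurable_fst).mul (gamma3_measurable τ kap w i j)).mul
      ((hfm j).comp measurable_snd)
  set B : ℝ := ∑ i, ∑ j, |Mmat kap w i j| with hBdef
  have hGb : ∀ p : ℝ × ℝ, |G p| ≤ B * ((∑ i, |f p.1 i|) * (∑ j, |f p.2 j|)) := by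
    intro p
    calc |G p| ≤ ∑ i, ∑ j, |f p.1 i * Gamma3 τ kap w i j p.1 p.2 * f p.2 j| := by
          rw [hGdef]
          exact (Finset.abs_sum_le_sum_abs _ _).trans
            (Finset.sum_le_sum fun i _ => Finset.abs_sum_le_sum_abs _ _)
      _ ≤ ∑ i, ∑ j, |Mmat kap w i j| * ((∑ k, |f p.1 k|) * (∑ k, |f p.2 k|)) := by
          apply Finset.sum_le_sum; intro i _
          apply Finset.sum_le_sum; intro j _
          rw [abs_mul, abs_mul]
          have h1 : |f p.1 i| ≤ ∑ k, |f p.1 k| :=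
            Finset.single_le_sum (f := fun k => |f p.1 k|) (fun k _ => abs_nonneg _)
              (Finset.mem_univ i)
          have h2 : |f p.2 j| ≤ ∑ k, |f p.2 k| :=
            Finset.single_le_sum (f := fun k => |f p.2 k|) (fun k _ => abs_nonneg _)
              (Finset.mem_univ j)
          have h3 := gamma3_abs_le τ kap w i j p.1 p.2
          have hs1 : (0:ℝ) ≤ ∑ k, |f p.1 k| :=
            Finset.sum_nonneg fun k _ => abs_nonneg _
          calc |f p.1 i| * |Gamma3 τ kap w i j p.1 p.2| * |f p.2 j|
              = |Gamma3 τ kap w i j p.1 p.2| * (|f p.1 i| * |f p.2 j|) := by ring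
            _ ≤ |Mmat kap w i j| * ((∑ k, |f p.1 k|) * (∑ k, |f p.2 k|)) := by
                apply mul_le_mul h3 (mul_le_mul h1 h2 (abs_nonneg _) hs1)
                  (mul_nonneg (abs_nonneg _) (abs_nonneg _)) (abs_nonneg _)
      _ = B * ((∑ i, |f p.1 i|) * (∑ j, |f p.2 j|)) := by
          rw [hBdef]
          simp [Finset.sum_mul]
  have hGint : Integrable G (μ.prod μ) := by
    refine ((habs.mul_prod habs).const_mul B).mono' hGm.aestronglyMeasurable ?_
    filter_upwards with p
    rw [Real.norm_eq_abs]
    exact hGb p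
  -- per-t integrability of the summands in s
  have hints : ∀ (t : ℝ) (i j : Fin N),
      Integrable (fun s => f t i * (Gamma3 τ kap w i j t s * f s j)) μ := by
    intro t i j
    apply Integrable.const_mul
    refine (hfi j).bdd_mul (c := |Mmat kap w i j|) (gamma3_measurable_right τ kap w i j t).aestronglyMeasurable
      (Filter.Eventually.of_forall fun s => ?_)
    rw [Real.norm_eq_abs]
    exact gamma3_abs_le τ kap w i j t s
  -- Q equals the product integral of G
  have hQ : (∫ t, ∑ i, f t i *
        (∑ j, ∫ s, Gamma3 τ kap w i j t s * f s j ∂μ) ∂μ)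
      = ∫ p, G p ∂(μ.prod μ) := by
    rw [integral_prod G hGint]
    apply integral_congr_ae
    filter_upwards with t
    calc ∑ i, f t i * (∑ j, ∫ s, Gamma3 τ kap w i j t s * f s j ∂μ)
        = ∑ i, ∑ j, ∫ s, f t i * (Gamma3 τ kap w i j t s * f s j) ∂μ := by
          apply Finset.sum_congr rfl; intro i _
          rw [Finset.mul_sum]
          apply Finset.sum_congr rfl; intro j _
          rw [MeasureTheory.integral_const_mul]
      _ = ∑ i, ∫ s, ∑ j, f t i * (Gamma3 τ kap w i j t s * f s j) ∂μ := by
          apply Finset.sum_congr rfl; intro i _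
          exact (integral_finset_sum _ fun j _ => hints t i j).symm
      _ = ∫ s, ∑ i, ∑ j, f t i * (Gamma3 τ kap w i j t s * f s j) ∂μ := by
          exact (integral_finset_sum _ fun i _ =>
            integrable_finset_sum _ fun j _ => hints t i j).symm
      _ = ∫ s, G (t, s) ∂μ := by
          apply integral_congr_ae
          filter_upwards with s
          rw [hGdef]
          apply Finset.sum_congr rfl; intro i _
          apply Finset.sum_congr rfl; intro j _
          ring
  have hGs_int : Integrable (fun p : ℝ × ℝ => G p.swap) (μ.prod μ) := hGint.swap
  have hswap : ∫ p, G p ∂(μ.prod μ) = ∫ p : ℝ × ℝ, G p.swap ∂(μ.prod μ) :=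
    (integral_prod_swap G).symm
  -- pointwise symmetrized bound
  have hkey : ∀ p : ℝ × ℝ, -(C * ((∑ i, (f p.1 i)^2) + (∑ i, (f p.2 i)^2)) / 2)
      ≤ G p + G p.swap := by
    rintro ⟨t, s⟩
    simp only [Prod.swap_prod_mk, Prod.fst, Prod.snd]
    have hGsum : G (t, s) + G (s, t) = ∑ i, ∑ j, f t i *
        (Gamma3 τ kap w i j t s + Gamma3 τ kap w j i s t) * f s j := by
      have h2 : G (s, t) = ∑ i, ∑ j, f t i * Gamma3 τ kap w j i s t * f s j := by
        rw [hGdef]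
        simp only
        rw [Finset.sum_comm]
        apply Finset.sum_congr rfl; intro i _
        apply Finset.sum_congr rfl; intro j _
        ring
      rw [hGdef] at h2 ⊢
      simp only at h2 ⊢
      rw [h2, ← Finset.sum_add_distrib]
      apply Finset.sum_congr rfl; intro i _
      rw [← Finset.sum_add_distrib]
      apply Finset.sum_congr rfl; intro j _
      ring
    set Ft := Real.sqrt (∑ i, (f t i)^2) with hFt
    set Fs := Real.sqrt (∑ i, (f s i)^2) with hFs
    have habsb : |G (t, s) + G (s, t)| ≤ C * (Ft * Fs) := by
      rw [hGsum]
      by_cases hA : 0 < t - s ∧ t - s < τ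
      · have : ∀ i j : Fin N, f t i * (Gamma3 τ kap w i j t s + Gamma3 τ kap w j i s t) * f s j
            = f t i * Mmat kap w i j * f s j := fun i j => by
          rw [gamma3_sym_eq τ kap w i j hA]
        calc |∑ i, ∑ j, f t i * (Gamma3 τ kap w i j t s + Gamma3 τ kap w j i s t) * f s j|
            = |∑ i, ∑ j, f t i * Mmat kap w i j * f s j| := by
              congr 1
              exact Finset.sum_congr rfl fun i _ => Finset.sum_congr rfl fun j _ => this i j
          _ ≤ C * (Ft * Fs) := matCS (Mmat kap w) _ _
      · by_cases hB : 0 < s - t ∧ s - t < τ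
        · have : ∀ i j : Fin N, f t i * (Gamma3 τ kap w i j t s + Gamma3 τ kap w j i s t) * f s j
              = f t i * Mmat kap w j i * f s j := fun i j => by
            rw [add_comm (Gamma3 τ kap w i j t s), gamma3_sym_eq τ kap w j i hB]
          calc |∑ i, ∑ j, f t i * (Gamma3 τ kap w i j t s + Gamma3 τ kap w j i s t) * f s j|
              = |∑ i, ∑ j, f t i * Mmat kap w j i * f s j| := by
                congr 1
                exact Finset.sum_congr rfl fun i _ => Finset.sum_congr rfl fun j _ => this i j
            _ ≤ Real.sqrt (∑ i, ∑ j, (Mmat kap w j i)^2) * (Ft * Fs) :=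
                matCS (fun i j => Mmat kap w j i) _ _
            _ = C * (Ft * Fs) := by rw [hCdef, Finset.sum_comm]
        · have : ∀ i j : Fin N, f t i * (Gamma3 τ kap w i j t s + Gamma3 τ kap w j i s t) * f s j
              = 0 := fun i j => by rw [gamma3_zero τ kap w i j hA hB]; ring
          calc |∑ i, ∑ j, f t i * (Gamma3 τ kap w i j t s + Gamma3 τ kap w j i s t) * f s j|
              = 0 := by
                simp only [this, Finset.sum_const_zero, abs_zero]
            _ ≤ C * (Ft * Fs) := by positivity
    have hFt2 : Ft^2 = ∑ i, (f t i)^2 := Real.sq_sqrt (Finset.sum_nonneg fun i _ => sq_nonneg _)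
    have hFs2 : Fs^2 = ∑ i, (f s i)^2 := Real.sq_sqrt (Finset.sum_nonneg fun i _ => sq_nonneg _)
    have hprod : Ft * Fs ≤ ((∑ i, (f t i)^2) + (∑ i, (f s i)^2)) / 2 := by
      rw [← hFt2, ← hFs2]
      nlinarith [sq_nonneg (Ft - Fs)]
    have h1 : C * (Ft * Fs) ≤ C * (((∑ i, (f t i)^2) + (∑ i, (f s i)^2)) / 2) :=
      mul_le_mul_of_nonneg_left hprod hC0
    have h2 := neg_abs_le (G (t, s) + G (s, t))
    have h3 := habsb
    have : -(C * ((∑ i, (f t i)^2) + (∑ i, (f s i)^2)) / 2) ≤ G (t, s) + G (s, t) := by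
      nlinarith
    exact this
  -- integrability of the dominating function
  have hfst : Integrable (fun p : ℝ × ℝ => ∑ i, (f p.1 i)^2) (μ.prod μ) := by
    have h1 := hfint.mul_prod (integrable_const (1:ℝ)) (ν := μ)
    simpa using h1
  have hsnd : Integrable (fun p : ℝ × ℝ => ∑ i, (f p.2 i)^2) (μ.prod μ) := by
    have h1 := hfst.swap
    exact h1
  have hRint : Integrable
      (fun p : ℝ × ℝ => C * ((∑ i, (f p.1 i)^2) + (∑ i, (f p.2 i)^2)) / 2) (μ.prod μ) :=
    ((hfst.add hsnd).const_mul C).div_const 2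
  have hmono : ∫ p, -(C * ((∑ i, (f p.1 i)^2) + (∑ i, (f p.2 i)^2)) / 2) ∂(μ.prod μ)
      ≤ ∫ p, (G p + G p.swap) ∂(μ.prod μ) :=
    integral_mono hRint.neg (hGint.add hGs_int) hkey
  have e1 : ∫ p : ℝ × ℝ, (∑ i, (f p.1 i)^2) ∂(μ.prod μ) = T * I := by
    rw [integral_prod _ hfst]
    simp only [integral_const, measureReal_def, hμuniv, smul_eq_mul]
    rw [MeasureTheory.integral_const_mul]
  have e2 : ∫ p : ℝ × ℝ, (∑ i, (f p.2 i)^2) ∂(μ.prod μ) = T * I := by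
    rw [integral_prod _ hsnd]
    simp only [← hIdef, integral_const, measureReal_def, hμuniv, smul_eq_mul]
  have hRval : ∫ p, -(C * ((∑ i, (f p.1 i)^2) + (∑ i, (f p.2 i)^2)) / 2) ∂(μ.prod μ)
      = -(C * T * I) := by
    rw [integral_neg, integral_div, MeasureTheory.integral_const_mul,
      integral_add hfst hsnd, e1, e2]
    ring
  have hint_add : ∫ p, (G p + G p.swap) ∂(μ.prod μ) = 2 * ∫ p, G p ∂(μ.prod μ) := by
    rw [integral_add hGint hGs_int, ← hswap]; ring
  rw [hQ]
  rw [hRval, hint_add] at hmono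
  linarith
end
end

section
/- For every f∈L²([0,T],ℝ^N) it holds that ⟨f,𝚪¹f⟩_{L²,N} = ∫₀^T (∫₀^T 1_{{u−τ<t<u}}f(t)dt)ᵀ · Δε(I_N−Δw)(I_N−w) · (∫₀^T 1_{{u−τ<s<u}}f(s)ds) du. Consequently, if xᵀΔε(I_N−Δw)(I_N−w)x ≥ 0 for every x∈ℝ^N, then ⟨f,𝚪¹f⟩_{L²,N} ≥ 0 for every f∈L²([0,T],ℝ^N). -/
open MeasureTheory Set Filter

noncomputable section
namespace G1

def ind (τ t u : ℝ) : ℝ := if u - τ < t ∧ t < u then 1 else 0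

lemma ind_nonneg (τ t u : ℝ) : 0 ≤ ind τ t u := by unfold ind; split <;> norm_num
lemma ind_le_one (τ t u : ℝ) : ind τ t u ≤ 1 := by unfold ind; split <;> norm_num
lemma abs_ind_le_one (τ t u : ℝ) : |ind τ t u| ≤ 1 := by
  rw [abs_of_nonneg (ind_nonneg τ t u)]; exact ind_le_one τ t u
lemma measurable_ind (τ : ℝ) : Measurable fun p : ℝ × ℝ => ind τ p.1 p.2 := by
  unfold ind
  refine Measurable.ite ?_ measurable_const measurable_const
  exact ((measurableSet_lt (measurable_snd.sub measurable_const) measurable_fst).inter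
    (measurableSet_lt measurable_fst measurable_snd))
lemma measurable_ind_left (τ t : ℝ) : Measurable fun u => ind τ t u :=
  (measurable_ind τ).comp (measurable_const.prodMk measurable_id)
lemma measurable_ind_right (τ u : ℝ) : Measurable fun t => ind τ t u :=
  (measurable_ind τ).comp (measurable_id.prodMk measurable_const)

lemma l2_int {g : ℝ → ℝ} {μ : Measure ℝ} [IsFiniteMeasure μ] (hm : Measurable g)
    (h2 : Integrable (fun t => g t ^ 2) μ) : Integrable g μ := by
  refine (h2.add (integrable_const 1)).mono' hm.aestronglyMeasurable ?_
  filter_upwards with t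
  simp only [Real.norm_eq_abs, Pi.add_apply]
  nlinarith [sq_nonneg (|g t| - 1), abs_nonneg (g t), sq_abs (g t)]

lemma ind_eq_indicator (τ a r : ℝ) :
    ind τ a r = (Ioo a (a + τ)).indicator (fun _ => (1:ℝ)) r := by
  unfold ind
  simp only [Set.indicator_apply, mem_Ioo]
  refine if_congr ?_ rfl rfl
  constructor <;> rintro ⟨h1, h2⟩ <;> exact ⟨by linarith, by linarith⟩

lemma ite_eq_ind (τ a r : ℝ) :
    (if 0 < r - a ∧ r - a < τ then (1:ℝ) else 0) = ind τ a r := by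
  unfold ind
  refine if_congr ?_ rfl rfl
  constructor <;> rintro ⟨h1, h2⟩ <;> exact ⟨by linarith, by linarith⟩

/-- The key Fubini computation. -/
lemma key (T τ : ℝ) (g h : ℝ → ℝ) (hgm : Measurable g) (hhm : Measurable h)
    (hg : Integrable g (volume.restrict (Icc (0:ℝ) T)))
    (hh : Integrable h (volume.restrict (Icc (0:ℝ) T))) :
    (∫ t in Icc (0:ℝ) T, g t *
        ∫ s in Icc (0:ℝ) T, (∫ u in Icc (0:ℝ) T, ind τ t u * ind τ s u) * h s)
    = ∫ u in Icc (0:ℝ) T,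
        (∫ t in Icc (0:ℝ) T, ind τ t u * g t) * (∫ s in Icc (0:ℝ) T, ind τ s u * h s) := by
  set μ := volume.restrict (Icc (0:ℝ) T) with hμ
  set F : ℝ → ℝ → ℝ → ℝ := fun t s u => (ind τ t u * g t) * (ind τ s u * h s) with hF
  have hFb : ∀ t s u, ‖F t s u‖ ≤ |g t| * |h s| := by
    intro t s u
    simp only [hF, Real.norm_eq_abs, abs_mul]
    have h1 := abs_ind_le_one τ t u
    have h2 := abs_ind_le_one τ s u
    have e : |g t| * |h s| = 1 * |g t| * (1 * |h s|) := by ring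
    rw [e]
    gcongr <;> first | assumption | positivity
  have step1 : (∫ t in Icc (0:ℝ) T, g t *
        ∫ s in Icc (0:ℝ) T, (∫ u in Icc (0:ℝ) T, ind τ t u * ind τ s u) * h s)
      = ∫ t, ∫ s, ∫ u, F t s u ∂μ ∂μ ∂μ := by
    refine integral_congr_ae (Filter.Eventually.of_forall fun t => ?_)
    dsimp only
    rw [← integral_const_mul]
    refine integral_congr_ae (Filter.Eventually.of_forall fun s => ?_)
    dsimp only
    have : ∫ u, F t s u ∂μ = ∫ u, (ind τ t u * ind τ s u) * (g t * h s) ∂μ := by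
      refine integral_congr_ae (Filter.Eventually.of_forall fun u => ?_); simp only [hF]; ring
    rw [this, integral_mul_const, hμ]; ring
  rw [step1]
  have step2 : ∀ t : ℝ, (∫ s, ∫ u, F t s u ∂μ ∂μ) = ∫ u, ∫ s, F t s u ∂μ ∂μ := by
    intro t
    refine integral_integral_swap ?_
    refine Integrable.mono' ((hh.abs.const_mul |g t|).mul_prod (integrable_const 1)) ?_ ?_
    · refine Measurable.aestronglyMeasurable ?_
      simp only [hF, Function.uncurry]
      exact ((((measurable_ind τ).comp (measurable_const.prodMk measurable_snd)).mul
        measurable_const).mul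
        (((measurable_ind τ).comp (measurable_fst.prodMk measurable_snd)).mul
          (hhm.comp measurable_fst)))
    · refine Filter.Eventually.of_forall fun p => ?_
      calc ‖F t p.1 p.2‖ ≤ |g t| * |h p.1| := hFb t p.1 p.2
        _ = |g t| * |h p.1| * 1 := by ring
  simp only [step2]
  have meas_inner : StronglyMeasurable fun p : ℝ × ℝ => ∫ s, F p.1 s p.2 ∂μ := by
    have : Measurable fun q : (ℝ × ℝ) × ℝ => F q.1.1 q.2 q.1.2 := by
      simp only [hF]
      exact ((((measurable_ind τ).comp ((measurable_fst.comp measurable_fst).prodMk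
          (measurable_snd.comp measurable_fst))).mul
          (hgm.comp (measurable_fst.comp measurable_fst))).mul
        (((measurable_ind τ).comp (measurable_snd.prodMk
          (measurable_snd.comp measurable_fst))).mul (hhm.comp measurable_snd)))
    exact this.stronglyMeasurable.integral_prod_right'
  have hC : ∀ t u : ℝ, ‖∫ s, F t s u ∂μ‖ ≤ |g t| * (∫ s, |h s| ∂μ) := by
    intro t u
    calc ‖∫ s, F t s u ∂μ‖ ≤ ∫ s, ‖F t s u‖ ∂μ := norm_integral_le_integral_norm _
      _ ≤ ∫ s, |g t| * |h s| ∂μ := by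
          refine integral_mono_of_nonneg (Filter.Eventually.of_forall fun s => norm_nonneg _)
            (hh.abs.const_mul _) (Filter.Eventually.of_forall fun s => hFb t s u)
      _ = |g t| * ∫ s, |h s| ∂μ := integral_const_mul _ _
  have step3 : (∫ t, ∫ u, ∫ s, F t s u ∂μ ∂μ ∂μ) = ∫ u, ∫ t, ∫ s, F t s u ∂μ ∂μ ∂μ := by
    refine integral_integral_swap ?_
    refine Integrable.mono' ((hg.abs.mul_prod (integrable_const (∫ s, |h s| ∂μ)))) ?_ ?_
    · exact meas_inner.aestronglyMeasurable
    · exact Filter.Eventually.of_forall fun p => hC p.1 p.2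
  rw [step3]
  refine integral_congr_ae (Filter.Eventually.of_forall fun u => ?_)
  have e1 : ∀ t : ℝ, ∫ s, F t s u ∂μ = (ind τ t u * g t) * ∫ s, ind τ s u * h s ∂μ := by
    intro t; rw [← integral_const_mul]
  simp only [e1]
  rw [integral_mul_const]

end G1


variable {Ω : Type}

/-- The kernel `Γ¹` from the systemic risk example. -/
def Gamma1 (T τ : ℝ) {N : ℕ} (eps : Fin N → ℝ) (w : Fin N → Fin N → ℝ)
    (i j : Fin N) (t s : ℝ) : ℝ :=
  eps i * (1 - w i i) * ((if i = j then 1 else 0) - w i j) *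
    ∫ r in Icc (max s t) T,
      (if 0 < r - t ∧ r - t < τ then 1 else 0)
        * (if 0 < r - s ∧ r - s < τ then (1:ℝ) else 0)

/-- The matrix `Δε (I_N − Δw)(I_N − w)`. -/
def Gamma1Mat {N : ℕ} (eps : Fin N → ℝ) (w : Fin N → Fin N → ℝ) :
    Matrix (Fin N) (Fin N) ℝ :=
  Matrix.diagonal eps * ((1 : Matrix (Fin N) (Fin N) ℝ) - Matrix.diagonal (fun i => w i i))
    * ((1 : Matrix (Fin N) (Fin N) ℝ) - Matrix.of w)


namespace G1

lemma gamma1Mat_apply {N : ℕ} (eps : Fin N → ℝ) (w : Fin N → Fin N → ℝ) (i j : Fin N) :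
    Gamma1Mat eps w i j = eps i * (1 - w i i) * ((if i = j then 1 else 0) - w i j) := by
  have h1 : ((1 : Matrix (Fin N) (Fin N) ℝ) - Matrix.diagonal (fun i => w i i))
      = Matrix.diagonal (fun i => 1 - w i i) := by
    rw [← Matrix.diagonal_one, Matrix.diagonal_sub]
  have h2 : Matrix.diagonal eps * Matrix.diagonal (fun i => 1 - w i i)
      = Matrix.diagonal (fun i => eps i * (1 - w i i)) := Matrix.diagonal_mul_diagonal _ _
  have h3 : Gamma1Mat eps w
      = Matrix.diagonal (fun i => eps i * (1 - w i i)) * ((1 : Matrix (Fin N) (Fin N) ℝ) - Matrix.of w) := by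
    unfold Gamma1Mat; rw [h1, h2]
  rw [h3, Matrix.diagonal_mul, Matrix.sub_apply, Matrix.one_apply, Matrix.of_apply]

lemma gamma1_eq (T τ : ℝ) {N : ℕ} (eps : Fin N → ℝ) (w : Fin N → Fin N → ℝ) (i j : Fin N)
    {t s : ℝ} (ht : 0 ≤ t) (hs : 0 ≤ s) :
    Gamma1 T τ eps w i j t s
      = Gamma1Mat eps w i j * ∫ u in Icc (0:ℝ) T, ind τ t u * ind τ s u := by
  rw [gamma1Mat_apply]
  unfold Gamma1
  congr 1
  have hS : MeasurableSet ((Ioo t (t+τ)) ∩ (Ioo s (s+τ))) :=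
    measurableSet_Ioo.inter measurableSet_Ioo
  have hfun : ∀ r : ℝ, (if 0 < r - t ∧ r - t < τ then (1:ℝ) else 0) *
      (if 0 < r - s ∧ r - s < τ then (1:ℝ) else 0)
      = ((Ioo t (t+τ)) ∩ (Ioo s (s+τ))).indicator (fun _ => (1:ℝ)) r := by
    intro r
    rw [ite_eq_ind, ite_eq_ind, ind_eq_indicator, ind_eq_indicator,
      ← Set.inter_indicator_mul]
    simp [Set.indicator_apply]
  have hfun2 : ∀ r : ℝ, ind τ t r * ind τ s r
      = ((Ioo t (t+τ)) ∩ (Ioo s (s+τ))).indicator (fun _ => (1:ℝ)) r := by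
    intro r
    rw [ind_eq_indicator, ind_eq_indicator, ← Set.inter_indicator_mul]
    simp [Set.indicator_apply]
  rw [setIntegral_congr_fun measurableSet_Icc fun r _ => hfun r,
    setIntegral_congr_fun measurableSet_Icc fun r _ => hfun2 r,
    setIntegral_indicator hS, setIntegral_indicator hS]
  have hAB : Icc (max s t) T ∩ ((Ioo t (t+τ)) ∩ (Ioo s (s+τ)))
      = Icc (0:ℝ) T ∩ ((Ioo t (t+τ)) ∩ (Ioo s (s+τ))) := by
    ext r
    simp only [mem_inter_iff, mem_Icc, mem_Ioo]
    constructor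
    · rintro ⟨⟨h1, h2⟩, ⟨h3, h4⟩, h5, h6⟩
      exact ⟨⟨by linarith, h2⟩, ⟨h3, h4⟩, h5, h6⟩
    · rintro ⟨⟨h1, h2⟩, ⟨h3, h4⟩, h5, h6⟩
      exact ⟨⟨max_le h5.le h3.le, h2⟩, ⟨h3, h4⟩, h5, h6⟩
  rw [hAB]

end G1

/-- Representation of the quadratic form of `𝚪¹` and nonnegativity
whenever `Δε(I_N − Δw)(I_N − w)` is nonnegative definite. -/
theorem gamma1_representation
    (T : ℝ) (hT : 0 < T) (N : ℕ) (τ : ℝ) (hτ : τ ∈ Icc (0:ℝ) T)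
    (eps : Fin N → ℝ) (heps : ∀ i, 0 < eps i)
    (w : Fin N → Fin N → ℝ) (hw : ∀ i j, 0 ≤ w i j) :
    (∀ f : ℝ → Fin N → ℝ, MemL2N T f →
      (∫ t in Icc (0:ℝ) T, ∑ i, f t i *
          (∑ j, ∫ s in Icc (0:ℝ) T, Gamma1 T τ eps w i j t s * f s j))
        = ∫ u in Icc (0:ℝ) T, ∑ i,
            (∫ t in Icc (0:ℝ) T, if u - τ < t ∧ t < u then f t i else 0) *
              (Gamma1Mat eps w).mulVec
                (fun i' => ∫ s in Icc (0:ℝ) T, if u - τ < s ∧ s < u then f s i' else 0) i) ∧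
    ((∀ x : Fin N → ℝ, 0 ≤ ∑ i, x i * (Gamma1Mat eps w).mulVec x i) →
      ∀ f : ℝ → Fin N → ℝ, MemL2N T f →
        0 ≤ ∫ t in Icc (0:ℝ) T, ∑ i, f t i *
            (∑ j, ∫ s in Icc (0:ℝ) T, Gamma1 T τ eps w i j t s * f s j)) := by
  have hitef : ∀ (f : ℝ → Fin N → ℝ) (i : Fin N) (u t : ℝ),
      (if u - τ < t ∧ t < u then f t i else 0) = G1.ind τ t u * f t i := by
    intro f i u t; unfold G1.ind; split_ifs <;> simp
  have hrep : ∀ f : ℝ → Fin N → ℝ, MemL2N T f →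
      (∫ t in Icc (0:ℝ) T, ∑ i, f t i *
          (∑ j, ∫ s in Icc (0:ℝ) T, Gamma1 T τ eps w i j t s * f s j))
        = ∫ u in Icc (0:ℝ) T, ∑ i,
            (∫ t in Icc (0:ℝ) T, if u - τ < t ∧ t < u then f t i else 0) *
              (Gamma1Mat eps w).mulVec
                (fun i' => ∫ s in Icc (0:ℝ) T, if u - τ < s ∧ s < u then f s i' else 0) i := by
    intro f hf
    obtain ⟨hfm, hfi⟩ := hf
    have hfint : ∀ i, Integrable (fun t => f t i) (volume.restrict (Icc (0:ℝ) T)) := by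
      intro i
      refine G1.l2_int (hfm i) ?_
      refine hfi.mono' ((hfm i).pow_const 2).aestronglyMeasurable ?_
      filter_upwards with t
      rw [Real.norm_eq_abs, abs_of_nonneg (sq_nonneg _)]
      exact Finset.single_le_sum (fun j _ => sq_nonneg (f t j)) (Finset.mem_univ i)
    set C0 : ℝ := (volume (Icc (0:ℝ) T)).toReal with hC0
    set B : Fin N → ℝ := fun j => ∫ s in Icc (0:ℝ) T, |f s j| with hB
    -- bound on the u-kernel
    have hKnn : ∀ t s : ℝ, 0 ≤ ∫ u in Icc (0:ℝ) T, G1.ind τ t u * G1.ind τ s u :=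
      fun t s => integral_nonneg fun u => mul_nonneg (G1.ind_nonneg _ _ _) (G1.ind_nonneg _ _ _)
    have hKb : ∀ t s : ℝ, |∫ u in Icc (0:ℝ) T, G1.ind τ t u * G1.ind τ s u| ≤ C0 := by
      intro t s
      rw [abs_of_nonneg (hKnn t s)]
      calc (∫ u in Icc (0:ℝ) T, G1.ind τ t u * G1.ind τ s u)
          ≤ ∫ _u in Icc (0:ℝ) T, (1:ℝ) := by
            refine integral_mono_of_nonneg
              (Filter.Eventually.of_forall fun u => mul_nonneg (G1.ind_nonneg _ _ _) (G1.ind_nonneg _ _ _))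
              (integrable_const 1)
              (Filter.Eventually.of_forall fun u =>
                mul_le_one₀ (G1.ind_le_one _ _ _) (G1.ind_nonneg _ _ _) (G1.ind_le_one _ _ _))
        _ = C0 := by simp [hC0, ENNReal.toReal_ofReal']
    have hKmeas : StronglyMeasurable fun p : ℝ × ℝ =>
        ∫ u in Icc (0:ℝ) T, G1.ind τ p.1 u * G1.ind τ p.2 u := by
      have hm : Measurable fun q : (ℝ × ℝ) × ℝ =>
          G1.ind τ q.1.1 q.2 * G1.ind τ q.1.2 q.2 :=
        (((G1.measurable_ind τ).comp
            ((measurable_fst.comp measurable_fst).prodMk measurable_snd)).mul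
          ((G1.measurable_ind τ).comp
            ((measurable_snd.comp measurable_fst).prodMk measurable_snd)))
      exact hm.stronglyMeasurable.integral_prod_right'
    -- the inner s-integral Y j t
    have hYmeas : ∀ j, StronglyMeasurable fun t : ℝ =>
        ∫ s in Icc (0:ℝ) T, (∫ u in Icc (0:ℝ) T, G1.ind τ t u * G1.ind τ s u) * f s j := by
      intro j
      exact StronglyMeasurable.integral_prod_right'
        (hKmeas.mul ((hfm j).comp measurable_snd).stronglyMeasurable)
    have hYb : ∀ (j : Fin N) (t : ℝ),
        ‖∫ s in Icc (0:ℝ) T, (∫ u in Icc (0:ℝ) T, G1.ind τ t u * G1.ind τ s u) * f s j‖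
          ≤ C0 * B j := by
      intro j t
      calc ‖∫ s in Icc (0:ℝ) T, (∫ u in Icc (0:ℝ) T, G1.ind τ t u * G1.ind τ s u) * f s j‖
          ≤ ∫ s in Icc (0:ℝ) T,
              ‖(∫ u in Icc (0:ℝ) T, G1.ind τ t u * G1.ind τ s u) * f s j‖ :=
            norm_integral_le_integral_norm _
        _ ≤ ∫ s in Icc (0:ℝ) T, C0 * |f s j| := by
            refine integral_mono_of_nonneg (Filter.Eventually.of_forall fun s => norm_nonneg _)
              ((hfint j).abs.const_mul C0) (Filter.Eventually.of_forall fun s => ?_)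
            dsimp only
            rw [Real.norm_eq_abs, abs_mul]
            exact mul_le_mul_of_nonneg_right (hKb t s) (abs_nonneg _)
        _ = C0 * B j := by rw [integral_const_mul]
    have hfY : ∀ (i j : Fin N), Integrable (fun t =>
        f t i * ∫ s in Icc (0:ℝ) T, (∫ u in Icc (0:ℝ) T, G1.ind τ t u * G1.ind τ s u) * f s j)
        (volume.restrict (Icc (0:ℝ) T)) := by
      intro i j
      refine Integrable.mono' ((hfint i).abs.mul_const (C0 * B j))
        ((hfm i).aestronglyMeasurable.mul (hYmeas j).aestronglyMeasurable) ?_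
      refine Filter.Eventually.of_forall fun t => ?_
      rw [norm_mul, Real.norm_eq_abs]
      exact mul_le_mul_of_nonneg_left (hYb j t) (abs_nonneg _)
    have hA : ∀ (i j : Fin N), Integrable (fun t => Gamma1Mat eps w i j *
        (f t i * ∫ s in Icc (0:ℝ) T, (∫ u in Icc (0:ℝ) T, G1.ind τ t u * G1.ind τ s u) * f s j))
        (volume.restrict (Icc (0:ℝ) T)) := fun i j => (hfY i j).const_mul _
    -- the u-side functions G i u
    have hGmeas : ∀ i, StronglyMeasurable fun u : ℝ =>
        ∫ t in Icc (0:ℝ) T, G1.ind τ t u * f t i := by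
      intro i
      have hm : Measurable fun p : ℝ × ℝ => G1.ind τ p.2 p.1 * f p.2 i :=
        ((G1.measurable_ind τ).comp (measurable_snd.prodMk measurable_fst)).mul
          ((hfm i).comp measurable_snd)
      exact hm.stronglyMeasurable.integral_prod_right'
    have hGb : ∀ (i : Fin N) (u : ℝ), ‖∫ t in Icc (0:ℝ) T, G1.ind τ t u * f t i‖ ≤ B i := by
      intro i u
      calc ‖∫ t in Icc (0:ℝ) T, G1.ind τ t u * f t i‖
          ≤ ∫ t in Icc (0:ℝ) T, ‖G1.ind τ t u * f t i‖ := norm_integral_le_integral_norm _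
        _ ≤ ∫ t in Icc (0:ℝ) T, |f t i| := by
            refine integral_mono_of_nonneg (Filter.Eventually.of_forall fun t => norm_nonneg _)
              (hfint i).abs (Filter.Eventually.of_forall fun t => ?_)
            dsimp only
            rw [Real.norm_eq_abs, abs_mul]
            calc |G1.ind τ t u| * |f t i| ≤ 1 * |f t i| :=
                  mul_le_mul_of_nonneg_right (G1.abs_ind_le_one _ _ _) (abs_nonneg _)
              _ = |f t i| := one_mul _
        _ = B i := rfl
    have hGint : ∀ (i j : Fin N), Integrable (fun u => Gamma1Mat eps w i j *
        ((∫ t in Icc (0:ℝ) T, G1.ind τ t u * f t i) *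
          (∫ s in Icc (0:ℝ) T, G1.ind τ s u * f s j))) (volume.restrict (Icc (0:ℝ) T)) := by
      intro i j
      refine Integrable.const_mul ?_ _
      refine Integrable.mono' (integrable_const (B i * B j))
        ((hGmeas i).aestronglyMeasurable.mul (hGmeas j).aestronglyMeasurable) ?_
      refine Filter.Eventually.of_forall fun u => ?_
      rw [norm_mul]
      have h0 : (0:ℝ) ≤ B i := le_trans (norm_nonneg _) (hGb i u)
      exact mul_le_mul (hGb i u) (hGb j u) (norm_nonneg _) h0
    -- transform the LHS
    have L1 : (∫ t in Icc (0:ℝ) T, ∑ i, f t i *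
          (∑ j, ∫ s in Icc (0:ℝ) T, Gamma1 T τ eps w i j t s * f s j))
        = ∫ t in Icc (0:ℝ) T, ∑ i, ∑ j, Gamma1Mat eps w i j *
            (f t i * ∫ s in Icc (0:ℝ) T,
              (∫ u in Icc (0:ℝ) T, G1.ind τ t u * G1.ind τ s u) * f s j) := by
      refine setIntegral_congr_fun measurableSet_Icc fun t ht => ?_
      refine Finset.sum_congr rfl fun i _ => ?_
      rw [Finset.mul_sum]
      refine Finset.sum_congr rfl fun j _ => ?_
      have e : (∫ s in Icc (0:ℝ) T, Gamma1 T τ eps w i j t s * f s j)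
          = ∫ s in Icc (0:ℝ) T, Gamma1Mat eps w i j *
              ((∫ u in Icc (0:ℝ) T, G1.ind τ t u * G1.ind τ s u) * f s j) := by
        refine setIntegral_congr_fun measurableSet_Icc fun s hsI => ?_
        rw [G1.gamma1_eq T τ eps w i j ht.1 hsI.1]
        ring
      rw [e, integral_const_mul]
      ring
    have L2 : (∫ t in Icc (0:ℝ) T, ∑ i, ∑ j, Gamma1Mat eps w i j *
          (f t i * ∫ s in Icc (0:ℝ) T,
            (∫ u in Icc (0:ℝ) T, G1.ind τ t u * G1.ind τ s u) * f s j))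
        = ∑ i, ∑ j, Gamma1Mat eps w i j * ∫ t in Icc (0:ℝ) T,
            f t i * ∫ s in Icc (0:ℝ) T,
              (∫ u in Icc (0:ℝ) T, G1.ind τ t u * G1.ind τ s u) * f s j := by
      rw [integral_finset_sum _ (fun i _ => integrable_finset_sum _ (fun j _ => hA i j))]
      refine Finset.sum_congr rfl fun i _ => ?_
      rw [integral_finset_sum _ (fun j _ => hA i j)]
      exact Finset.sum_congr rfl fun j _ => integral_const_mul _ _
    have L3 : ∀ (i j : Fin N),
        (∫ t in Icc (0:ℝ) T, f t i * ∫ s in Icc (0:ℝ) T,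
            (∫ u in Icc (0:ℝ) T, G1.ind τ t u * G1.ind τ s u) * f s j)
        = ∫ u in Icc (0:ℝ) T, (∫ t in Icc (0:ℝ) T, G1.ind τ t u * f t i) *
            (∫ s in Icc (0:ℝ) T, G1.ind τ s u * f s j) := fun i j =>
      G1.key T τ (fun t => f t i) (fun s => f s j) (hfm i) (hfm j) (hfint i) (hfint j)
    -- transform the RHS
    have R1 : (∫ u in Icc (0:ℝ) T, ∑ i,
            (∫ t in Icc (0:ℝ) T, if u - τ < t ∧ t < u then f t i else 0) *
              (Gamma1Mat eps w).mulVec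
                (fun i' => ∫ s in Icc (0:ℝ) T, if u - τ < s ∧ s < u then f s i' else 0) i)
        = ∫ u in Icc (0:ℝ) T, ∑ i, ∑ j, Gamma1Mat eps w i j *
            ((∫ t in Icc (0:ℝ) T, G1.ind τ t u * f t i) *
              (∫ s in Icc (0:ℝ) T, G1.ind τ s u * f s j)) := by
      refine integral_congr_ae (Filter.Eventually.of_forall fun u => ?_)
      dsimp only
      refine Finset.sum_congr rfl fun i _ => ?_
      simp only [Matrix.mulVec, dotProduct, hitef f]
      rw [Finset.mul_sum]
      exact Finset.sum_congr rfl fun j _ => by ring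
    have R2 : (∫ u in Icc (0:ℝ) T, ∑ i, ∑ j, Gamma1Mat eps w i j *
            ((∫ t in Icc (0:ℝ) T, G1.ind τ t u * f t i) *
              (∫ s in Icc (0:ℝ) T, G1.ind τ s u * f s j)))
        = ∑ i, ∑ j, Gamma1Mat eps w i j * ∫ u in Icc (0:ℝ) T,
            (∫ t in Icc (0:ℝ) T, G1.ind τ t u * f t i) *
              (∫ s in Icc (0:ℝ) T, G1.ind τ s u * f s j) := by
      rw [integral_finset_sum _ (fun i _ => integrable_finset_sum _ (fun j _ => hGint i j))]
      refine Finset.sum_congr rfl fun i _ => ?_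
      rw [integral_finset_sum _ (fun j _ => hGint i j)]
      exact Finset.sum_congr rfl fun j _ => integral_const_mul _ _
    rw [L1, L2, R1, R2]
    exact Finset.sum_congr rfl fun i _ => Finset.sum_congr rfl fun j _ => by rw [L3 i j]
  refine ⟨hrep, fun hpos f hf => ?_⟩
  rw [hrep f hf]
  refine setIntegral_nonneg measurableSet_Icc fun u _ => ?_
  exact hpos fun i' => ∫ s in Icc (0:ℝ) T, if u - τ < s ∧ s < u then f s i' else 0
end
end

section
/- For a matrix M∈ℝ^{N×N} define the bounded operator L_M on L²([0,T],ℝ^N) by (L_M f)^i(t) := λf^i(t) + (𝐀̃f^i)(t) + (1/N)Σ_{j=1}^N M_{ij}(𝐁̃f^j)(t). Suppose w∈[0,1]^{N×N} and c₀>0 satisfy ⟨f,L_w f⟩_{L²,N} ≥ c₀⟨f,f⟩_{L²,N} for all f∈L²([0,T],ℝ^N). Then for every matrix v∈ℝ^{N×N} and all f∈L²([0,T],ℝ^N): ⟨f,L_v f⟩_{L²,N} ≥ (c₀ − (1/N)·‖w−v‖₂·‖𝐁̃‖_op)·⟨f,f⟩_{L²,N}, where ‖·‖₂ is the spectral norm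 on ℝ^{N×N} and ‖𝐁̃‖_op the operator norm of 𝐁̃ on L²([0,T],ℝ). -/
open MeasureTheory Set Filter

noncomputable section

variable {Ω : Type}

/-- Objective functional `J₀^{i,N}` of player `i` in the `N`-player game on a weighted
graph with interaction matrix `w`. -/
def Jgraph (T : ℝ) {mΩ : MeasurableSpace Ω} (P : Measure Ω) {N : ℕ}
    (Atil Btil Ctil : ℝ → ℝ → ℝ) (lam : ℝ) (w : Fin N → Fin N → ℝ)
    (b : Fin N → ℝ → Ω → ℝ) (bstar : ℝ → Ω → ℝ) (c : Fin N → Ω → ℝ)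
    (i : Fin N) (α : Fin N → ℝ → Ω → ℝ) : ℝ :=
  ∫ ω,
    (- ip T (fun t => α i t ω)
        (fun t => opK T Atil (fun s => α i s ω) t + lam * α i t ω)
      - (1 / (N:ℝ)) * ∑ j, w i j *
          ip T (fun t => α i t ω)
            (fun t => opK T Btil (fun s => α j s ω) t + opKadj T Btil (fun s => α j s ω) t)
      - (1 / (N:ℝ)^2) * ∑ j, ∑ k, w i j * w i k *
          ip T (fun t => α j t ω) (opK T Ctil (fun s => α k s ω))
      + ip T (fun t => b i t ω) (fun t => α i t ω)
      + (1 / (N:ℝ)) * ∑ j, w i j * ip T (fun t => bstar t ω) (fun t => α j t ω)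
      + c i ω) ∂P

/-- Nash equilibrium of the `N`-player graph game. -/
def IsNashGraph (T : ℝ) {mΩ : MeasurableSpace Ω} (F : Filtration ℝ mΩ) (P : Measure Ω) {N : ℕ}
    (Atil Btil Ctil : ℝ → ℝ → ℝ) (lam : ℝ) (w : Fin N → Fin N → ℝ)
    (b : Fin N → ℝ → Ω → ℝ) (bstar : ℝ → Ω → ℝ) (c : Fin N → Ω → ℝ)
    (α : Fin N → ℝ → Ω → ℝ) : Prop :=
  (∀ i, Admissible T F P (α i)) ∧
    ∀ (i : Fin N) (β : ℝ → Ω → ℝ), Admissible T F P β →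
      Jgraph T P Atil Btil Ctil lam w b bstar c i (Function.update α i β)
        ≤ Jgraph T P Atil Btil Ctil lam w b bstar c i α

/-- Assumption (G2): coercivity of `λI + 𝐀̃ + (1/N) w ⋅ 𝐁̃` on `L²([0,T],ℝ^N)`. -/
def CoercGraph (T : ℝ) {N : ℕ} (Atil Btil : ℝ → ℝ → ℝ) (lam : ℝ)
    (w : Fin N → Fin N → ℝ) (c₀ : ℝ) : Prop :=
  ∀ f : ℝ → Fin N → ℝ, MemL2N T f →
    c₀ * (∫ t in Icc (0:ℝ) T, ∑ i, (f t i) ^ 2) ≤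
      ∫ t in Icc (0:ℝ) T, ∑ i, f t i *
        (lam * f t i + opK T Atil (fun s => f s i) t
          + (1 / (N:ℝ)) * ∑ j, w i j * opK T Btil (fun s => f s j) t)

/-- Euclidean norm on `ℝ^N`. -/
def euclN {N : ℕ} (x : Fin N → ℝ) : ℝ := Real.sqrt (∑ i, (x i) ^ 2)

/-- Spectral norm (ℓ²-operator norm) of an `N × N` real matrix. -/
def specNorm {N : ℕ} (M : Matrix (Fin N) (Fin N) ℝ) : ℝ :=
  sInf {x : ℝ | 0 ≤ x ∧ ∀ v : Fin N → ℝ, euclN (M.mulVec v) ≤ x * euclN v}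

/-- Operator norm of the integral operator induced by `G` on `L²([0,T],ℝ)`. -/
def timeOpNorm (T : ℝ) (G : ℝ → ℝ → ℝ) : ℝ :=
  sInf {x : ℝ | 0 ≤ x ∧ ∀ f : ℝ → ℝ, MemL2 T f →
    (∫ t in Icc (0:ℝ) T, (opK T G f t) ^ 2) ≤ x ^ 2 * ∫ t in Icc (0:ℝ) T, (f t) ^ 2}


variable {α : Type*} [MeasurableSpace α] {μ : Measure α}

private lemma l2_mul_integrable {f g : α → ℝ}
    (hf : Measurable f) (hg : Measurable g)
    (hf2 : Integrable (fun t => (f t)^2) μ) (hg2 : Integrable (fun t => (g t)^2) μ) :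
    Integrable (fun t => f t * g t) μ := by
  refine Integrable.mono' (((hf2.add hg2)).div_const 2)
    ((hf.mul hg).aestronglyMeasurable) ?_
  filter_upwards with t
  rw [Real.norm_eq_abs, abs_mul]
  simp only [Pi.add_apply]
  have h1 : |f t| ^ 2 = (f t)^2 := sq_abs _
  have h2 : |g t| ^ 2 = (g t)^2 := sq_abs _
  nlinarith [sq_nonneg (|f t| - |g t|), abs_nonneg (f t), abs_nonneg (g t)]

private lemma key_cs {A B C : ℝ} (hA : 0 ≤ A) (hC : 0 ≤ C)
    (h : ∀ ε : ℝ, 0 < ε → 2 * B ≤ ε * A + C / ε) :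
    B ≤ Real.sqrt A * Real.sqrt C := by
  rcases eq_or_lt_of_le hA with hA0 | hA0
  · rw [← hA0, Real.sqrt_zero, zero_mul]
    by_contra hB; push_neg at hB
    have h1 := h (C / B + 1) (by positivity)
    rw [← hA0, mul_zero, zero_add] at h1
    have h2 : C / (C / B + 1) < B := by
      rw [div_lt_iff₀ (by positivity)]
      have : C / B * B = C := div_mul_cancel₀ _ (ne_of_gt hB)
      nlinarith
    linarith
  · rcases eq_or_lt_of_le hC with hC0 | hC0
    · rw [← hC0, Real.sqrt_zero, mul_zero]
      by_contra hB; push_neg at hB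
      have h1 := h (B / A) (by positivity)
      rw [← hC0] at h1
      have h2 : B / A * A = B := div_mul_cancel₀ _ (ne_of_gt hA0)
      simp only [h2] at h1
      have : (0:ℝ) / (B / A) = 0 := zero_div _
      rw [this] at h1; linarith
    · have hsA : 0 < Real.sqrt A := Real.sqrt_pos.2 hA0
      have hsC : 0 < Real.sqrt C := Real.sqrt_pos.2 hC0
      have h1 := h (Real.sqrt C / Real.sqrt A) (by positivity)
      have hAe : Real.sqrt A * Real.sqrt A = A := Real.mul_self_sqrt hA
      have hCe : Real.sqrt C * Real.sqrt C = C := Real.mul_self_sqrt hC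
      have e1 : Real.sqrt C / Real.sqrt A * A = Real.sqrt C * Real.sqrt A := by
        field_simp; nlinarith
      have e2 : C / (Real.sqrt C / Real.sqrt A) = Real.sqrt A * Real.sqrt C := by
        rw [div_div_eq_mul_div]; field_simp; nlinarith
      rw [e1, e2] at h1; linarith

private lemma integral_cs {f g : α → ℝ}
    (hf : Measurable f) (hg : Measurable g)
    (hf2 : Integrable (fun t => (f t)^2) μ) (hg2 : Integrable (fun t => (g t)^2) μ) :
    ∫ t, f t * g t ∂μ ≤
      Real.sqrt (∫ t, (f t)^2 ∂μ) * Real.sqrt (∫ t, (g t)^2 ∂μ) := by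
  apply key_cs (integral_nonneg fun t => sq_nonneg _) (integral_nonneg fun t => sq_nonneg _)
  intro ε hε
  have hmul := l2_mul_integrable hf hg hf2 hg2 (μ := μ)
  calc 2 * ∫ t, f t * g t ∂μ = ∫ t, 2 * (f t * g t) ∂μ := by rw [integral_const_mul]
    _ ≤ ∫ t, (ε * (f t)^2 + (g t)^2 / ε) ∂μ := by
        apply integral_mono (hmul.const_mul 2) ((hf2.const_mul ε).add (hg2.div_const ε))
        intro t
        simp only [Pi.add_apply]
        have h : 0 ≤ (ε * f t - g t)^2 := sq_nonneg _
        have hd : g t ^ 2 / ε * ε = g t ^ 2 := div_mul_cancel₀ _ hε.ne'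
        nlinarith [sq_nonneg (g t), mul_pos hε hε]
    _ = ε * (∫ t, (f t)^2 ∂μ) + (∫ t, (g t)^2 ∂μ) / ε := by
        rw [integral_add (hf2.const_mul ε) (hg2.div_const ε), integral_const_mul,
          integral_div]

private lemma sq_integral_mul_le {f g : α → ℝ}
    (hf : Measurable f) (hg : Measurable g)
    (hf2 : Integrable (fun t => (f t)^2) μ) (hg2 : Integrable (fun t => (g t)^2) μ) :
    (∫ t, f t * g t ∂μ)^2 ≤ (∫ t, (f t)^2 ∂μ) * ∫ t, (g t)^2 ∂μ := by
  have habs : |∫ t, f t * g t ∂μ| ≤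
      Real.sqrt (∫ t, (f t)^2 ∂μ) * Real.sqrt (∫ t, (g t)^2 ∂μ) := by
    calc |∫ t, f t * g t ∂μ| ≤ ∫ t, |f t| * |g t| ∂μ := by
          rw [← Real.norm_eq_abs]
          refine (norm_integral_le_integral_norm _).trans ?_
          apply le_of_eq; congr 1; funext t; rw [Real.norm_eq_abs, abs_mul]
      _ ≤ _ := by
          have := integral_cs (μ := μ) hf.abs hg.abs (by simpa [sq_abs] using hf2)
            (by simpa [sq_abs] using hg2)
          simpa [sq_abs] using this
  have h1 : (∫ t, f t * g t ∂μ)^2 = |∫ t, f t * g t ∂μ|^2 := (sq_abs _).symm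
  rw [h1]
  calc |∫ t, f t * g t ∂μ|^2
      ≤ (Real.sqrt (∫ t, (f t)^2 ∂μ) * Real.sqrt (∫ t, (g t)^2 ∂μ))^2 := by
        apply pow_le_pow_left₀ (abs_nonneg _) habs
    _ = _ := by
        rw [mul_pow, Real.sq_sqrt (integral_nonneg fun t => sq_nonneg _),
          Real.sq_sqrt (integral_nonneg fun t => sq_nonneg _)]

private lemma opK_measurable (T : ℝ) {G : ℝ → ℝ → ℝ} (hG : Measurable (Function.uncurry G))
    {f : ℝ → ℝ} (hf : Measurable f) : Measurable (opK T G f) := by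
  have h : Measurable (Function.uncurry fun t s => G t s * f s) :=
    hG.mul (hf.comp measurable_snd)
  exact (h.stronglyMeasurable.integral_prod_right
    (ν := volume.restrict (Icc (0:ℝ) T))).measurable

set_option maxHeartbeats 1000000 in
private lemma opK_l2 (T : ℝ) {G : ℝ → ℝ → ℝ} (hG : IsL2Kernel T G)
    {f : ℝ → ℝ} (hf : MemL2 T f) :
    Integrable (fun t => (opK T G f t)^2) (volume.restrict (Icc (0:ℝ) T)) ∧
    (∫ t in Icc (0:ℝ) T, (opK T G f t)^2) ≤
      (∫ p : ℝ × ℝ, (G p.1 p.2)^2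
          ∂((volume.restrict (Icc (0:ℝ) T)).prod (volume.restrict (Icc (0:ℝ) T))))
        * ∫ t in Icc (0:ℝ) T, (f t)^2 := by
  set μ := volume.restrict (Icc (0:ℝ) T) with hμ
  have hmeas : Measurable (opK T G f) := opK_measurable T hG.1 hf.1
  have hKint : Integrable (fun t => ∫ s, (G t s)^2 ∂μ) μ := hG.2.integral_prod_left
  have hpt : ∀ᵐ t ∂μ, (opK T G f t)^2 ≤ (∫ s, (G t s)^2 ∂μ) * ∫ s, (f s)^2 ∂μ := by
    filter_upwards [hG.2.prod_right_ae] with t ht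
    exact sq_integral_mul_le (hG.1.of_uncurry_left) hf.1 ht hf.2
  have hint : Integrable (fun t => (opK T G f t)^2) μ := by
    refine Integrable.mono' (hKint.mul_const (∫ s, (f s)^2 ∂μ))
      (hmeas.pow_const 2).aestronglyMeasurable ?_
    filter_upwards [hpt] with t ht
    rwa [Real.norm_eq_abs, abs_of_nonneg (sq_nonneg _)]
  refine ⟨hint, le_trans (integral_mono_ae hint (hKint.mul_const _) hpt) ?_⟩
  rw [integral_mul_const]
  have hII : (∫ t, (∫ s, (G t s)^2 ∂μ) ∂μ) = ∫ p : ℝ × ℝ, (G p.1 p.2)^2 ∂(μ.prod μ) :=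
    integral_integral hG.2
  rw [hII]

private lemma timeOpNorm_spec (T : ℝ) {G : ℝ → ℝ → ℝ} (hG : IsL2Kernel T G) :
    0 ≤ timeOpNorm T G ∧ ∀ f : ℝ → ℝ, MemL2 T f →
      (∫ t in Icc (0:ℝ) T, (opK T G f t)^2) ≤
        (timeOpNorm T G)^2 * ∫ t in Icc (0:ℝ) T, (f t)^2 := by
  set S : Set ℝ := {x : ℝ | 0 ≤ x ∧ ∀ f : ℝ → ℝ, MemL2 T f →
    (∫ t in Icc (0:ℝ) T, (opK T G f t) ^ 2) ≤ x ^ 2 * ∫ t in Icc (0:ℝ) T, (f t) ^ 2} with hS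
  have hclosed : IsClosed S := by
    have : S = {x : ℝ | 0 ≤ x} ∩
        ⋂ (f : {f : ℝ → ℝ // MemL2 T f}),
          {x : ℝ | (∫ t in Icc (0:ℝ) T, (opK T G f.1 t) ^ 2) ≤
            x ^ 2 * ∫ t in Icc (0:ℝ) T, (f.1 t) ^ 2} := by
      ext x
      simp only [hS, Set.mem_setOf_eq, Set.mem_inter_iff, Set.mem_iInter, Subtype.forall]
    rw [this]
    exact (isClosed_le continuous_const continuous_id).inter
      (isClosed_iInter fun f => isClosed_le continuous_const
        ((continuous_pow 2).mul continuous_const))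
  have hK : (0:ℝ) ≤ ∫ p : ℝ × ℝ, (G p.1 p.2)^2
      ∂((volume.restrict (Icc (0:ℝ) T)).prod (volume.restrict (Icc (0:ℝ) T))) :=
    integral_nonneg fun p => sq_nonneg _
  have hne : S.Nonempty := by
    refine ⟨Real.sqrt (∫ p : ℝ × ℝ, (G p.1 p.2)^2
      ∂((volume.restrict (Icc (0:ℝ) T)).prod (volume.restrict (Icc (0:ℝ) T)))),
      Real.sqrt_nonneg _, fun f hf => ?_⟩
    rw [Real.sq_sqrt hK]
    exact (opK_l2 T hG hf).2
  have hbdd : BddBelow S := ⟨0, fun x hx => hx.1⟩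
  exact hclosed.csInf_mem hne hbdd

private lemma euclN_nonneg {n : ℕ} (x : Fin n → ℝ) : 0 ≤ euclN x := Real.sqrt_nonneg _

private lemma sum_mul_le_euclN {n : ℕ} (x y : Fin n → ℝ) :
    ∑ i, x i * y i ≤ euclN x * euclN y := by
  calc ∑ i, x i * y i ≤ |∑ i, x i * y i| := le_abs_self _
    _ = Real.sqrt ((∑ i, x i * y i)^2) := (Real.sqrt_sq_eq_abs _).symm
    _ ≤ Real.sqrt ((∑ i, (x i)^2) * ∑ i, (y i)^2) :=
        Real.sqrt_le_sqrt (Finset.sum_mul_sq_le_sq_mul_sq Finset.univ x y)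
    _ = euclN x * euclN y :=
        Real.sqrt_mul (Finset.sum_nonneg fun i _ => sq_nonneg _) _

private lemma specNorm_spec {n : ℕ} (M : Matrix (Fin n) (Fin n) ℝ) :
    0 ≤ specNorm M ∧ ∀ v : Fin n → ℝ, euclN (M.mulVec v) ≤ specNorm M * euclN v := by
  set S : Set ℝ := {x : ℝ | 0 ≤ x ∧ ∀ v : Fin n → ℝ, euclN (M.mulVec v) ≤ x * euclN v}
    with hS
  have hclosed : IsClosed S := by
    have : S = {x : ℝ | 0 ≤ x} ∩
        ⋂ (v : Fin n → ℝ), {x : ℝ | euclN (M.mulVec v) ≤ x * euclN v} := by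
      ext x
      simp only [hS, Set.mem_setOf_eq, Set.mem_inter_iff, Set.mem_iInter]
    rw [this]
    exact (isClosed_le continuous_const continuous_id).inter
      (isClosed_iInter fun v => isClosed_le continuous_const
        (continuous_id.mul continuous_const))
  have hne : S.Nonempty := by
    refine ⟨Real.sqrt (∑ i, ∑ j, (M i j)^2), Real.sqrt_nonneg _, fun v => ?_⟩
    have h1 : ∀ i, (∑ j, M i j * v j)^2 ≤ (∑ j, (M i j)^2) * ∑ j, (v j)^2 :=
      fun i => Finset.sum_mul_sq_le_sq_mul_sq Finset.univ _ _
    calc euclN (M.mulVec v) = Real.sqrt (∑ i, (∑ j, M i j * v j)^2) := by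
          simp [euclN, Matrix.mulVec, dotProduct]
      _ ≤ Real.sqrt (∑ i, (∑ j, (M i j)^2) * ∑ j, (v j)^2) :=
          Real.sqrt_le_sqrt (Finset.sum_le_sum fun i _ => h1 i)
      _ = Real.sqrt ((∑ i, ∑ j, (M i j)^2) * ∑ j, (v j)^2) := by rw [← Finset.sum_mul]
      _ = _ := Real.sqrt_mul (Finset.sum_nonneg fun i _ =>
            Finset.sum_nonneg fun j _ => sq_nonneg _) _
  exact hclosed.csInf_mem hne ⟨0, fun x hx => hx.1⟩


private lemma L2_add {α : Type*} [MeasurableSpace α] {μ : Measure α} {x y : α → ℝ}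
    (hxm : Measurable x) (hym : Measurable y)
    (hx : Integrable (fun t => (x t)^2) μ) (hy : Integrable (fun t => (y t)^2) μ) :
    Integrable (fun t => (x t + y t)^2) μ := by
  refine Integrable.mono' ((hx.add hy).const_mul 2)
    (((hxm.add hym).pow_const 2)).aestronglyMeasurable ?_
  filter_upwards with t
  simp only [Pi.add_apply]
  rw [Real.norm_eq_abs, abs_of_nonneg (sq_nonneg _)]
  nlinarith [sq_nonneg (x t - y t)]

private lemma L2_sum {α : Type*} [MeasurableSpace α] {μ : Measure α} {ι : Type*}
    (s : Finset ι) (F : ι → α → ℝ)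
    (hm : ∀ i, Measurable (F i)) (h2 : ∀ i, Integrable (fun t => (F i t)^2) μ) :
    Integrable (fun t => (∑ i ∈ s, F i t)^2) μ := by
  classical
  induction s using Finset.induction_on with
  | empty => simp only [Finset.sum_empty]; simpa using (integrable_const (0:ℝ))
  | insert _ _ h ih =>
      simp only [Finset.sum_insert h]
      exact L2_add (hm _) (Finset.measurable_sum _ fun i _ => hm i) (h2 _) ih

set_option maxHeartbeats 2000000

/-- Perturbation of the coercivity constant of
`λI + 𝐀̃ + (1/N) M ⋅ 𝐁̃` under a change of the interaction matrix, controlled by the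
spectral norm of the difference. -/
theorem coercivity_matrix_perturbation
    (T : ℝ) (hT : 0 < T) (N : ℕ) (hN : 0 < N)
    (Atil Btil : ℝ → ℝ → ℝ)
    (hA : IsVolterraKernel T Atil) (hBk : IsVolterraKernel T Btil)
    (lam : ℝ) (hlam : 0 < lam)
    (w : Fin N → Fin N → ℝ) (hw01 : ∀ i j, w i j ∈ Icc (0:ℝ) 1)
    (c₀ : ℝ) (hc₀ : 0 < c₀)
    (hcoerc : CoercGraph T Atil Btil lam w c₀) :
    ∀ v : Fin N → Fin N → ℝ, ∀ f : ℝ → Fin N → ℝ, MemL2N T f →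
      (c₀ - (1 / (N:ℝ)) * specNorm (Matrix.of (fun i j => w i j - v i j))
          * timeOpNorm T Btil)
          * (∫ t in Icc (0:ℝ) T, ∑ i, (f t i) ^ 2)
        ≤ ∫ t in Icc (0:ℝ) T, ∑ i, f t i *
            (lam * f t i + opK T Atil (fun s => f s i) t
              + (1 / (N:ℝ)) * ∑ j, v i j * opK T Btil (fun s => f s j) t) := by
  intro v f hf
  obtain ⟨hS0, hSle⟩ := specNorm_spec (Matrix.of fun i j => w i j - v i j)
  obtain ⟨hBn0, hBnle⟩ := timeOpNorm_spec T hBk.1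
  have hfim : ∀ i, Measurable fun t => f t i := hf.1
  have hfi2 : ∀ i, Integrable (fun t => (f t i)^2) (volume.restrict (Icc (0:ℝ) T)) := by
    intro i
    refine hf.2.mono' ((hfim i).pow_const 2).aestronglyMeasurable ?_
    filter_upwards with t
    rw [Real.norm_eq_abs, abs_of_nonneg (sq_nonneg _)]
    exact Finset.single_le_sum (f := fun j => (f t j)^2) (fun j _ => sq_nonneg _)
      (Finset.mem_univ i)
  have hfiL2 : ∀ i, MemL2 T fun t => f t i := fun i => ⟨hfim i, hfi2 i⟩
  have hgm : ∀ j, Measurable (opK T Btil fun s => f s j) :=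
    fun j => opK_measurable T hBk.1.1 (hfim j)
  have hg2 : ∀ j, Integrable (fun t => (opK T Btil (fun s => f s j) t)^2)
      (volume.restrict (Icc (0:ℝ) T)) := fun j => (opK_l2 T hBk.1 (hfiL2 j)).1
  have hgbd : ∀ j, (∫ t in Icc (0:ℝ) T, (opK T Btil (fun s => f s j) t)^2)
      ≤ (timeOpNorm T Btil)^2 * ∫ t in Icc (0:ℝ) T, (f t j)^2 := fun j => hBnle _ (hfiL2 j)
  have ham : ∀ i, Measurable (opK T Atil fun s => f s i) :=
    fun i => opK_measurable T hA.1.1 (hfim i)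
  have ha2 : ∀ i, Integrable (fun t => (opK T Atil (fun s => f s i) t)^2)
      (volume.restrict (Icc (0:ℝ) T)) := fun i => (opK_l2 T hA.1 (hfiL2 i)).1
  -- measurability and square-integrability of the inner factor
  have hXm : ∀ (m : Fin N → Fin N → ℝ) (i : Fin N),
      Measurable (fun t => lam * f t i + opK T Atil (fun s => f s i) t
        + (1/(N:ℝ)) * ∑ j, m i j * opK T Btil (fun s => f s j) t) := fun m i =>
    (((hfim i).const_mul lam).add (ham i)).add
      ((Finset.measurable_sum _ fun j _ => (hgm j).const_mul (m i j)).const_mul (1/(N:ℝ)))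
  have hX2 : ∀ (m : Fin N → Fin N → ℝ) (i : Fin N),
      Integrable (fun t => (lam * f t i + opK T Atil (fun s => f s i) t
        + (1/(N:ℝ)) * ∑ j, m i j * opK T Btil (fun s => f s j) t)^2)
        (volume.restrict (Icc (0:ℝ) T)) := by
    intro m i
    have h1 : Integrable (fun t => (lam * f t i)^2) (volume.restrict (Icc (0:ℝ) T)) := by
      have he : (fun t => (lam * f t i)^2) = fun t => lam^2 * (f t i)^2 :=
        funext fun t => by ring
      rw [he]; exact (hfi2 i).const_mul (lam^2)
    have hsum2 : Integrable (fun t => (∑ j, m i j * opK T Btil (fun s => f s j) t)^2)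
        (volume.restrict (Icc (0:ℝ) T)) :=
      L2_sum _ _ (fun j => (hgm j).const_mul (m i j)) (fun j => by
        have he : (fun t => (m i j * opK T Btil (fun s => f s j) t)^2)
            = fun t => (m i j)^2 * (opK T Btil (fun s => f s j) t)^2 :=
          funext fun t => by ring
        rw [he]; exact (hg2 j).const_mul ((m i j)^2))
    have h3 : Integrable
        (fun t => ((1/(N:ℝ)) * ∑ j, m i j * opK T Btil (fun s => f s j) t)^2)
        (volume.restrict (Icc (0:ℝ) T)) := by
      have he : (fun t => ((1/(N:ℝ)) * ∑ j, m i j * opK T Btil (fun s => f s j) t)^2)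
          = fun t => (1/(N:ℝ))^2 * (∑ j, m i j * opK T Btil (fun s => f s j) t)^2 :=
        funext fun t => by ring
      rw [he]; exact hsum2.const_mul ((1/(N:ℝ))^2)
    exact L2_add (x := fun t => lam * f t i + opK T Atil (fun s => f s i) t)
      (y := fun t => (1/(N:ℝ)) * ∑ j, m i j * opK T Btil (fun s => f s j) t)
      (((hfim i).const_mul lam).add (ham i))
      ((Finset.measurable_sum _ fun j _ => (hgm j).const_mul (m i j)).const_mul (1/(N:ℝ)))
      (L2_add (x := fun t => lam * f t i) (y := fun t => opK T Atil (fun s => f s i) t)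
        ((hfim i).const_mul lam) (ham i) h1 (ha2 i)) h3
  -- integrability of the two full integrands and of the perturbation
  have hIw : Integrable (fun t => ∑ i, f t i * (lam * f t i
      + opK T Atil (fun s => f s i) t
      + (1/(N:ℝ)) * ∑ j, w i j * opK T Btil (fun s => f s j) t))
      (volume.restrict (Icc (0:ℝ) T)) :=
    integrable_finset_sum _ fun i _ =>
      l2_mul_integrable (hfim i) (hXm w i) (hfi2 i) (hX2 w i)
  have hpm : ∀ i, Measurable (fun t => ∑ j, (w i j - v i j) * opK T Btil (fun s => f s j) t) :=
    fun i => Finset.measurable_sum _ fun j _ => (hgm j).const_mul _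
  have hp2 : ∀ i, Integrable
      (fun t => (∑ j, (w i j - v i j) * opK T Btil (fun s => f s j) t)^2)
      (volume.restrict (Icc (0:ℝ) T)) := fun i =>
    L2_sum _ _ (fun j => (hgm j).const_mul _) (fun j => by
      have he : (fun t => ((w i j - v i j) * opK T Btil (fun s => f s j) t)^2)
          = fun t => (w i j - v i j)^2 * (opK T Btil (fun s => f s j) t)^2 :=
        funext fun t => by ring
      rw [he]; exact (hg2 j).const_mul ((w i j - v i j)^2))
  have hpertInt : Integrable
      (fun t => ∑ i, f t i * ∑ j, (w i j - v i j) * opK T Btil (fun s => f s j) t)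
      (volume.restrict (Icc (0:ℝ) T)) :=
    integrable_finset_sum _ fun i _ => l2_mul_integrable (hfim i) (hpm i) (hfi2 i) (hp2 i)
  -- Euclidean-norm functions
  have hI0 : (0:ℝ) ≤ ∫ t in Icc (0:ℝ) T, ∑ i, (f t i)^2 :=
    integral_nonneg fun t => Finset.sum_nonneg fun i _ => sq_nonneg _
  have heFm : Measurable (fun t => euclN (f t)) := by
    unfold euclN
    exact Real.continuous_sqrt.measurable.comp
      (Finset.measurable_sum _ fun i _ => (hfim i).pow_const 2)
  have heFsq : (fun t => (euclN (f t))^2) = fun t => ∑ i, (f t i)^2 := funext fun t => by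
    unfold euclN
    exact Real.sq_sqrt (Finset.sum_nonneg fun i _ => sq_nonneg _)
  have heF2 : Integrable (fun t => (euclN (f t))^2) (volume.restrict (Icc (0:ℝ) T)) := by
    rw [heFsq]; exact hf.2
  have heGm : Measurable (fun t => euclN (fun j => opK T Btil (fun s => f s j) t)) := by
    unfold euclN
    exact Real.continuous_sqrt.measurable.comp
      (Finset.measurable_sum _ fun j _ => (hgm j).pow_const 2)
  have heGsq : (fun t => (euclN (fun j => opK T Btil (fun s => f s j) t))^2)
      = fun t => ∑ j, (opK T Btil (fun s => f s j) t)^2 := funext fun t => by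
    unfold euclN
    exact Real.sq_sqrt (Finset.sum_nonneg fun j _ => sq_nonneg _)
  have heG2 : Integrable (fun t => (euclN (fun j => opK T Btil (fun s => f s j) t))^2)
      (volume.restrict (Icc (0:ℝ) T)) := by
    rw [heGsq]; exact integrable_finset_sum _ fun j _ => hg2 j
  -- pointwise bound on the perturbation
  have hpt : ∀ t, (∑ i, f t i * ∑ j, (w i j - v i j) * opK T Btil (fun s => f s j) t)
      ≤ specNorm (Matrix.of fun i j => w i j - v i j)
        * (euclN (f t) * euclN (fun j => opK T Btil (fun s => f s j) t)) := by
    intro t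
    have h1 : (∑ i, f t i * ∑ j, (w i j - v i j) * opK T Btil (fun s => f s j) t)
        = ∑ i, f t i * ((Matrix.of fun i j => w i j - v i j).mulVec
            (fun j => opK T Btil (fun s => f s j) t)) i := by
      simp [Matrix.mulVec, dotProduct]
    rw [h1]
    calc ∑ i, f t i * ((Matrix.of fun i j => w i j - v i j).mulVec
            (fun j => opK T Btil (fun s => f s j) t)) i
        ≤ euclN (f t) * euclN ((Matrix.of fun i j => w i j - v i j).mulVec
            (fun j => opK T Btil (fun s => f s j) t)) := sum_mul_le_euclN _ _
      _ ≤ euclN (f t) * (specNorm (Matrix.of fun i j => w i j - v i j)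
            * euclN (fun j => opK T Btil (fun s => f s j) t)) :=
          mul_le_mul_of_nonneg_left (hSle _) (euclN_nonneg _)
      _ = _ := by ring
  -- bound on the integrated perturbation
  have hg2I : (∫ t in Icc (0:ℝ) T, ∑ j, (opK T Btil (fun s => f s j) t)^2)
      ≤ (timeOpNorm T Btil)^2 * ∫ t in Icc (0:ℝ) T, ∑ i, (f t i)^2 := by
    rw [integral_finset_sum _ (fun j _ => hg2 j),
      integral_finset_sum _ (fun i (_ : i ∈ Finset.univ) => hfi2 i), Finset.mul_sum]
    exact Finset.sum_le_sum fun j _ => hgbd j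
  have hEint : Integrable
      (fun t => euclN (f t) * euclN (fun j => opK T Btil (fun s => f s j) t))
      (volume.restrict (Icc (0:ℝ) T)) := l2_mul_integrable heFm heGm heF2 heG2
  have hpb : (∫ t in Icc (0:ℝ) T,
        ∑ i, f t i * ∑ j, (w i j - v i j) * opK T Btil (fun s => f s j) t)
      ≤ specNorm (Matrix.of fun i j => w i j - v i j) * timeOpNorm T Btil
        * ∫ t in Icc (0:ℝ) T, ∑ i, (f t i)^2 := by
    calc (∫ t in Icc (0:ℝ) T,
          ∑ i, f t i * ∑ j, (w i j - v i j) * opK T Btil (fun s => f s j) t)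
        ≤ ∫ t in Icc (0:ℝ) T, specNorm (Matrix.of fun i j => w i j - v i j)
            * (euclN (f t) * euclN (fun j => opK T Btil (fun s => f s j) t)) :=
          integral_mono hpertInt (hEint.const_mul _) hpt
      _ = specNorm (Matrix.of fun i j => w i j - v i j)
            * ∫ t in Icc (0:ℝ) T,
              euclN (f t) * euclN (fun j => opK T Btil (fun s => f s j) t) :=
          integral_const_mul _ _
      _ ≤ specNorm (Matrix.of fun i j => w i j - v i j)
            * (Real.sqrt (∫ t in Icc (0:ℝ) T, (euclN (f t))^2)
              * Real.sqrt (∫ t in Icc (0:ℝ) T,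
                  (euclN (fun j => opK T Btil (fun s => f s j) t))^2)) :=
          mul_le_mul_of_nonneg_left (integral_cs heFm heGm heF2 heG2) hS0
      _ ≤ specNorm (Matrix.of fun i j => w i j - v i j)
            * (Real.sqrt (∫ t in Icc (0:ℝ) T, ∑ i, (f t i)^2)
              * (timeOpNorm T Btil * Real.sqrt (∫ t in Icc (0:ℝ) T, ∑ i, (f t i)^2))) := by
          rw [heFsq, heGsq]
          refine mul_le_mul_of_nonneg_left (mul_le_mul_of_nonneg_left ?_ (Real.sqrt_nonneg _)) hS0
          calc Real.sqrt (∫ t in Icc (0:ℝ) T, ∑ j, (opK T Btil (fun s => f s j) t)^2)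
              ≤ Real.sqrt ((timeOpNorm T Btil)^2 * ∫ t in Icc (0:ℝ) T, ∑ i, (f t i)^2) :=
                Real.sqrt_le_sqrt hg2I
            _ = timeOpNorm T Btil * Real.sqrt (∫ t in Icc (0:ℝ) T, ∑ i, (f t i)^2) := by
                rw [Real.sqrt_mul (sq_nonneg _), Real.sqrt_sq hBn0]
      _ = specNorm (Matrix.of fun i j => w i j - v i j) * timeOpNorm T Btil
            * (Real.sqrt (∫ t in Icc (0:ℝ) T, ∑ i, (f t i)^2)
              * Real.sqrt (∫ t in Icc (0:ℝ) T, ∑ i, (f t i)^2)) := by ring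
      _ = _ := by rw [Real.mul_self_sqrt hI0]
  -- pointwise decomposition of the integrand
  have hsplit : ∀ t, (∑ i, f t i * (lam * f t i + opK T Atil (fun s => f s i) t
        + (1/(N:ℝ)) * ∑ j, v i j * opK T Btil (fun s => f s j) t))
      = (∑ i, f t i * (lam * f t i + opK T Atil (fun s => f s i) t
        + (1/(N:ℝ)) * ∑ j, w i j * opK T Btil (fun s => f s j) t))
        - (1/(N:ℝ)) * ∑ i, f t i * ∑ j, (w i j - v i j) * opK T Btil (fun s => f s j) t := by
    intro t
    rw [Finset.mul_sum, ← Finset.sum_sub_distrib]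
    refine Finset.sum_congr rfl fun i _ => ?_
    have hj : (∑ j, (w i j - v i j) * opK T Btil (fun s => f s j) t)
        = (∑ j, w i j * opK T Btil (fun s => f s j) t)
          - ∑ j, v i j * opK T Btil (fun s => f s j) t := by
      rw [← Finset.sum_sub_distrib]
      exact Finset.sum_congr rfl fun j _ => sub_mul _ _ _
    rw [hj]; ring
  -- integral decomposition
  have heq : (∫ t in Icc (0:ℝ) T, ∑ i, f t i * (lam * f t i
        + opK T Atil (fun s => f s i) t
        + (1/(N:ℝ)) * ∑ j, v i j * opK T Btil (fun s => f s j) t))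
      = (∫ t in Icc (0:ℝ) T, ∑ i, f t i * (lam * f t i
        + opK T Atil (fun s => f s i) t
        + (1/(N:ℝ)) * ∑ j, w i j * opK T Btil (fun s => f s j) t))
        - (1/(N:ℝ)) * ∫ t in Icc (0:ℝ) T,
            ∑ i, f t i * ∑ j, (w i j - v i j) * opK T Btil (fun s => f s j) t := by
    rw [show (fun t => ∑ i, f t i * (lam * f t i + opK T Atil (fun s => f s i) t
        + (1/(N:ℝ)) * ∑ j, v i j * opK T Btil (fun s => f s j) t))
      = fun t => (∑ i, f t i * (lam * f t i + opK T Atil (fun s => f s i) t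
        + (1/(N:ℝ)) * ∑ j, w i j * opK T Btil (fun s => f s j) t))
        - (1/(N:ℝ)) * ∑ i, f t i * ∑ j, (w i j - v i j) * opK T Btil (fun s => f s j) t
      from funext hsplit]
    rw [integral_sub hIw (hpertInt.const_mul (1/(N:ℝ))), integral_const_mul]
  have hcw := hcoerc f hf
  have hmono : (1/(N:ℝ)) * (∫ t in Icc (0:ℝ) T,
        ∑ i, f t i * ∑ j, (w i j - v i j) * opK T Btil (fun s => f s j) t)
      ≤ (1/(N:ℝ)) * (specNorm (Matrix.of fun i j => w i j - v i j) * timeOpNorm T Btil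
        * ∫ t in Icc (0:ℝ) T, ∑ i, (f t i)^2) :=
    mul_le_mul_of_nonneg_left hpb (by positivity)
  rw [heq]
  nlinarith [hcw, hmono]
end
end
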